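/- arXiv:2105.01208 — 7 statements merged into one kernel-verified Lean document; each statement's English description precedes it below -/
import Mathlib

section
/- For all x, y ∈ Z_4^n, wt_E(x+y) ≡ wt_E(x) + wt_E(y) + 2⟨x,y⟩ (mod 8), where ⟨x,y⟩ = x_1y_1 + ... + x_ny_n (mod 4) is lifted to an integer in {0,1,2,3}. -/
open Finset

def nCount {n : ℕ} (x : Fin n → ZMod 4) (a : ZMod 4) : ℕ :=
  (Finset.univ.filter (fun i => x i = a)).card

def wtE {n : ℕ} (x : Fin n → ZMod 4) : ℕ :=
  nCount x 1 + 4 * nCount x 2 + nCount x 3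

/-- inner product over `Z_4` -/
def z4inner {n : ℕ} (x y : Fin n → ZMod 4) : ZMod 4 :=
  ∑ i : Fin n, x i * y i

def wE (a : ZMod 4) : ℕ :=
  (if a = 1 then 1 else 0) + 4 * (if a = 2 then 1 else 0) + (if a = 3 then 1 else 0)

lemma wtE_eq_sum {n : ℕ} (x : Fin n → ZMod 4) : wtE x = ∑ i, wE (x i) := by
  unfold wtE nCount wE
  rw [Finset.card_filter, Finset.card_filter, Finset.card_filter,
    Finset.sum_add_distrib, Finset.sum_add_distrib, Finset.mul_sum]

lemma pointwise : ∀ a b : ZMod 4,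
    wE (a + b) ≡ wE a + wE b + 2 * (a * b).val [MOD 8] := by
  decide

lemma sum_modEq {ι : Type*} (s : Finset ι) {m : ℕ} {f g : ι → ℕ}
    (h : ∀ i ∈ s, f i ≡ g i [MOD m]) : ∑ i ∈ s, f i ≡ ∑ i ∈ s, g i [MOD m] := by
  induction s using Finset.cons_induction with
  | empty => simp [Nat.ModEq.refl]
  | cons a s ha ih =>
      rw [Finset.sum_cons, Finset.sum_cons]
      exact (h a (Finset.mem_cons_self a s)).add
        (ih fun i hi => h i (Finset.mem_cons_of_mem hi))

lemma val_sum_modEq {n : ℕ} (f : Fin n → ZMod 4) :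
    (∑ i, f i).val ≡ ∑ i, (f i).val [MOD 4] := by
  induction n with
  | zero => simp [Nat.ModEq.refl]
  | succ m ih =>
      rw [Fin.sum_univ_succ, Fin.sum_univ_succ]
      calc (f 0 + ∑ i : Fin m, f i.succ).val
          ≡ (f 0).val + (∑ i : Fin m, f i.succ).val [MOD 4] := by
            rw [ZMod.val_add]; exact (Nat.mod_modEq _ 4)
        _ ≡ (f 0).val + ∑ i : Fin m, (f i.succ).val [MOD 4] :=
            Nat.ModEq.add_left _ (ih _)

theorem euclidean_weight_add_mod_eight {n : ℕ} (x y : Fin n → ZMod 4) :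
    wtE (x + y) ≡ wtE x + wtE y + 2 * (z4inner x y).val [MOD 8] := by
  have h1 : wtE (x + y) ≡ ∑ i, (wE (x i) + wE (y i) + 2 * (x i * y i).val) [MOD 8] := by
    rw [wtE_eq_sum]
    exact sum_modEq _ fun i _ => pointwise (x i) (y i)
  have h2 : (∑ i, (wE (x i) + wE (y i) + 2 * (x i * y i).val))
      = wtE x + wtE y + 2 * ∑ i, (x i * y i).val := by
    rw [wtE_eq_sum, wtE_eq_sum, Finset.sum_add_distrib, Finset.sum_add_distrib,
      Finset.mul_sum]
  have h3 : 2 * (z4inner x y).val ≡ 2 * ∑ i, (x i * y i).val [MOD 8] := by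
    have := (val_sum_modEq (fun i => x i * y i)).mul_left' (c := 2)
    simpa [z4inner] using this
  exact (h1.trans (h2 ▸ Nat.ModEq.refl _)).trans
    (Nat.ModEq.add_left _ h3.symm)
end

section
/- Let m ≥ 3 be odd, a, b : F_2^{m-1} → F_2 bent functions, and f(x,y) = 2a(x)(1+y) + 2b(x)y + y : F_2^m → Z_4. Let c_f ∈ Z_4^{2^m} be the truth table of f (values of f listed in lexicographic order of inputs). Then the Euclidean weight of c_f is divisible by 8, and consequently ⟨c_f, c_f⟩ = 0 in Z_4. -/
open Finset

def walsh {n : ℕ} (f : (Fin n → ZMod 2) → ZMod 2) (v : Fin n → ZMod 2) : ℤ :=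
  ∑ x : Fin n → ZMod 2, (-1 : ℤ) ^ (f x + ∑ i : Fin n, v i * x i).val

def IsBent {n : ℕ} (f : (Fin n → ZMod 2) → ZMod 2) : Prop :=
  ∀ v, walsh f v = 2 ^ (n / 2) ∨ walsh f v = -(2 ^ (n / 2))

/-- the gbent construction `f(x,y) = 2a(x)(1+y) + 2b(x)y + y` with values in `Z_4` -/
def gfun {m : ℕ} (a b : (Fin (m - 1) → ZMod 2) → ZMod 2)
    (z : (Fin (m - 1) → ZMod 2) × ZMod 2) : ZMod 4 :=
  2 * ((a z.1).val : ZMod 4) * (1 + ((z.2).val : ZMod 4)) +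
    2 * ((b z.1).val : ZMod 4) * ((z.2).val : ZMod 4) + ((z.2).val : ZMod 4)

/-- the truth table of `gfun a b` as a vector in `Z_4^{2^m}`, inputs listed in
lexicographic order (first coordinate most significant, the bit `y` least significant). -/
def cf (m : ℕ) (a b : (Fin (m - 1) → ZMod 2) → ZMod 2) : Fin (2 ^ m) → ZMod 4 :=
  fun k =>
    gfun a b
      (fun j : Fin (m - 1) => if Nat.testBit k.val (m - 1 - (j : ℕ)) then 1 else 0,
       if Nat.testBit k.val 0 then 1 else 0)

/-!
In the truth table, the entries with `y = 1` are `1` or `3` (Euclidean weight 1) and those with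
`y = 0` are `2 a(x)`, so `wt_E(c_f) = 2^(m-1) + 4 wt(a)`: only `a` matters. Bentness of `a` at the
zero frequency gives `2 wt(a) = u² ∓ u` with `u = 2^((m-1)/2)` even, whence
`wt_E(c_f) = 3u² ∓ 2u ≡ 0 (mod 8)`. Since `c² ≡ wt_E(c) (mod 4)` for every `c ∈ ℤ/4`,
`⟨c_f, c_f⟩ = wt_E(c_f) = 0` in `ℤ/4`.
-/

def euclidWt (c : ZMod 4) : ℕ := min c.val (4 - c.val) ^ 2

lemma wtE_eq_sum_euclidWt {n : ℕ} (x : Fin n → ZMod 4) : wtE x = ∑ i, euclidWt (x i) := by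
  rw [← Finset.sum_fiberwise' univ x euclidWt]
  simp only [sum_const, smul_eq_mul]
  -- `ZMod 4` is `Fin 4` by definition
  change _ = ∑ c : Fin 4, nCount x c * euclidWt c
  rw [Fin.sum_univ_four]
  change _ = nCount x 0 * 0 + nCount x 1 * 1 + nCount x 2 * 4 + nCount x 3 * 1
  rw [wtE]
  ring

lemma sum_mul_self_eq_wtE {n : ℕ} (x : Fin n → ZMod 4) :
    ∑ i, x i * x i = (wtE x : ZMod 4) := by
  have hsq : ∀ c : ZMod 4, c * c = (euclidWt c : ZMod 4) := by decide
  simp only [wtE_eq_sum_euclidWt, Nat.cast_sum, hsq]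

lemma walsh_zero {n : ℕ} (f : (Fin n → ZMod 2) → ZMod 2) :
    walsh f 0 = 2 ^ n - 2 * ∑ x, ((f x).val : ℤ) := by
  have hsign : ∀ c : ZMod 2, (-1 : ℤ) ^ c.val = 1 - 2 * c.val := by decide
  simp only [walsh, Pi.zero_apply, zero_mul, sum_const_zero, add_zero, hsign, sum_sub_distrib,
    ← mul_sum, sum_const, card_univ, Fintype.card_fun, ZMod.card, Fintype.card_fin]
  simp

def truthTableInput (m : ℕ) (k : Fin (2 ^ m)) : (Fin (m - 1) → ZMod 2) × ZMod 2 :=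
  (fun j : Fin (m - 1) => if Nat.testBit k.val (m - 1 - (j : ℕ)) then 1 else 0,
   if Nat.testBit k.val 0 then 1 else 0)

lemma cf_eq_comp (m : ℕ) (a b : (Fin (m - 1) → ZMod 2) → ZMod 2) :
    cf m a b = gfun a b ∘ truthTableInput m := rfl

lemma eq_of_ite_one_zero_eq {p q : Bool}
    (h : (if p then (1 : ZMod 2) else 0) = if q then 1 else 0) : p = q := by
  cases p <;> cases q <;> simp_all

lemma truthTableInput_injective (m : ℕ) : Function.Injective (truthTableInput m) := by
  intro k k' h
  ext
  refine Nat.eq_of_testBit_eq fun i => ?_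
  rcases Nat.lt_or_ge i m with hi | hi
  · rcases Nat.eq_zero_or_pos i with rfl | hi0
    · exact eq_of_ite_one_zero_eq (congrArg Prod.snd h)
    · have hbit := eq_of_ite_one_zero_eq (congrFun (congrArg Prod.fst h) ⟨m - 1 - i, by omega⟩)
      rwa [show m - 1 - (m - 1 - i) = i by omega] at hbit
  · have hlt : 2 ^ m ≤ 2 ^ i := Nat.pow_le_pow_right two_pos hi
    rw [Nat.testBit_lt_two_pow (k.isLt.trans_le hlt),
      Nat.testBit_lt_two_pow (k'.isLt.trans_le hlt)]

lemma truthTableInput_bijective {m : ℕ} (hm : 1 ≤ m) :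
    Function.Bijective (truthTableInput m) := by
  refine (Fintype.bijective_iff_injective_and_card _).2 ⟨truthTableInput_injective m, ?_⟩
  simp only [Fintype.card_fin, Fintype.card_prod, Fintype.card_fun, ZMod.card, ← pow_succ]
  congr 1
  omega

lemma sum_euclidWt_gfun {m : ℕ} (a b : (Fin (m - 1) → ZMod 2) → ZMod 2)
    (x : Fin (m - 1) → ZMod 2) :
    ∑ y, euclidWt (gfun a b (x, y)) = 4 * (a x).val + 1 := by
  simp only [gfun]
  generalize a x = α
  generalize b x = β
  revert α β
  decide

lemma wtE_cf {m : ℕ} (hm : 1 ≤ m) (a b : (Fin (m - 1) → ZMod 2) → ZMod 2) :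
    wtE (cf m a b) = 4 * ∑ x, (a x).val + 2 ^ (m - 1) := by
  calc wtE (cf m a b)
      = ∑ z, euclidWt (gfun a b z) := by
        rw [cf_eq_comp, wtE_eq_sum_euclidWt]
        exact (truthTableInput_bijective hm).sum_comp (fun z => euclidWt (gfun a b z))
    _ = ∑ x, (4 * (a x).val + 1) := by rw [Fintype.sum_prod_type]; simp only [sum_euclidWt_gfun]
    _ = 4 * ∑ x, (a x).val + 2 ^ (m - 1) := by simp [sum_add_distrib, mul_sum]

lemma eight_dvd_four_mul_add_sq {u s : ℤ} (hu : Even u)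
    (h : u ^ 2 - 2 * s = u ∨ u ^ 2 - 2 * s = -u) :
    8 ∣ 4 * s + u ^ 2 := by
  obtain ⟨v, rfl⟩ := hu
  rcases h with h | h
  · obtain ⟨k, hk⟩ := Int.even_mul_pred_self v
    exact ⟨v ^ 2 + k, by linear_combination -2 * h + 4 * hk⟩
  · obtain ⟨k, hk⟩ := Int.even_mul_succ_self v
    exact ⟨v ^ 2 + k, by linear_combination -2 * h + 4 * hk⟩

theorem cf_euclidean_weight_div_eight_general {m : ℕ} (hm : Odd m) (hm3 : 3 ≤ m)
    (a b : (Fin (m - 1) → ZMod 2) → ZMod 2) (ha : IsBent a) :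
    8 ∣ wtE (cf m a b) ∧ ∑ i : Fin (2 ^ m), cf m a b i * cf m a b i = 0 := by
  obtain ⟨t, rfl⟩ := hm
  have hpow : (2 : ℤ) ^ (2 * t + 1 - 1) = (2 ^ t) ^ 2 := by rw [← pow_mul]; congr 1; omega
  have hbent := ha 0
  rw [walsh_zero, hpow, show (2 * t + 1 - 1) / 2 = t by omega] at hbent
  have hwt : (wtE (cf (2 * t + 1) a b) : ℤ) = 4 * ∑ x, ((a x).val : ℤ) + (2 ^ t) ^ 2 := by
    rw [wtE_cf (by omega), ← hpow]
    push_cast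
    ring
  have h8 : 8 ∣ wtE (cf (2 * t + 1) a b) := by
    have heven : Even ((2 : ℤ) ^ t) := (Int.even_pow' (by omega)).2 even_two
    exact_mod_cast hwt ▸ eight_dvd_four_mul_add_sq heven hbent
  refine ⟨h8, ?_⟩
  rw [sum_mul_self_eq_wtE, ZMod.natCast_eq_zero_iff]
  exact (dvd_mul_left 4 2).trans h8

theorem cf_euclidean_weight_div_eight {m : ℕ} (hm : Odd m) (hm3 : 3 ≤ m)
    (a b : (Fin (m - 1) → ZMod 2) → ZMod 2) (ha : IsBent a) (hb : IsBent b) :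
    8 ∣ wtE (cf m a b) ∧ ∑ i : Fin (2 ^ m), cf m a b i * cf m a b i = 0 :=
  cf_euclidean_weight_div_eight_general hm hm3 a b ha
end

section
/- Let m ≥ 3 be odd and c_f ∈ Z_4^{2^m} the truth table of the gbent function f(x,y) = 2a(x)(1+y) + 2b(x)y + y built from bent functions a, b on F_2^{m-1}. Let C_f ⊆ Z_4^{2^m} be the Z_4-span of all cyclic shifts of c_f. Then C_f is self-orthogonal: ⟨u, v⟩ = 0 in Z_4 for all u, v ∈ C_f. -/
open Finset

/-- the `Z_4`-span of all cyclic shifts of `c` -/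
def cyclicSpan {n : ℕ} [NeZero n] (c : Fin n → ZMod 4) : Submodule (ZMod 4) (Fin n → ZMod 4) :=
  Submodule.span (ZMod 4) {v | ∃ t : Fin n, v = fun i => c (i + t)}


namespace CfSelfOrth

/-- parity indicator of an index, as an element of `ZMod 4` -/
def pp {n : ℕ} (i : Fin n) : ZMod 4 := if i.val % 2 = 1 then 1 else 0

lemma val_add_mod_two {m : ℕ} (hm : 1 ≤ m) (i t : Fin (2 ^ m)) :
    ((i + t).val) % 2 = (i.val + t.val) % 2 := by
  have h2 : (2 : ℕ) ∣ 2 ^ m := dvd_pow_self 2 (by omega)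
  rw [Fin.val_add, Nat.mod_mod_of_dvd _ h2]

lemma pp_add {m : ℕ} (hm : 1 ≤ m) (i t : Fin (2 ^ m)) :
    pp (i + t) = if (i.val + t.val) % 2 = 1 then (1 : ZMod 4) else 0 := by
  rw [pp, val_add_mod_two hm]

lemma sum_range_parity (k : ℕ) :
    (∑ i ∈ Finset.range (2 * k), (if i % 2 = 1 then (1 : ZMod 4) else 0)) = (k : ZMod 4) := by
  induction k with
  | zero => simp
  | succ k ih =>
    have : 2 * (k + 1) = (2 * k) + 1 + 1 := by ring
    rw [this, Finset.sum_range_succ, Finset.sum_range_succ, ih]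
    have h1 : (2 * k) % 2 = 0 := by omega
    have h2 : (2 * k + 1) % 2 = 1 := by omega
    rw [h1, h2]
    push_cast
    ring

lemma sum_pp {m : ℕ} (hm3 : 3 ≤ m) : (∑ i : Fin (2 ^ m), pp i) = 0 := by
  have : (∑ i : Fin (2 ^ m), pp i)
      = ∑ i ∈ Finset.range (2 ^ m), (if i % 2 = 1 then (1 : ZMod 4) else 0) := by
    rw [← Fin.sum_univ_eq_sum_range]
    rfl
  rw [this]
  have h : 2 ^ m = 2 * 2 ^ (m - 1) := by
    rw [← pow_succ']
    congr 1
    omega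
  rw [h, sum_range_parity]
  rw [ZMod.natCast_eq_zero_iff]
  have : 2 ^ (m - 1) = 4 * 2 ^ (m - 3) := by
    have : m - 1 = 2 + (m - 3) := by omega
    rw [this, pow_add]
    norm_num
  omega

lemma core {m : ℕ} (hm3 : 3 ≤ m) (c : Fin (2 ^ m) → ZMod 4)
    (g : Fin (2 ^ m) → ZMod 4) (hg : ∀ i, c i = 2 * g i + pp i) (d : Fin (2 ^ m)) :
    (∑ i : Fin (2 ^ m), c i * c (i + d)) = 0 := by
  have hm1 : 1 ≤ m := by omega
  have key : ∀ x p y q : ZMod 4, (2*x+p)*(2*y+q) = 2*x*q + 2*p*y + p*q := by decide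
  have expand : (∑ i : Fin (2 ^ m), c i * c (i + d))
      = (∑ i : Fin (2 ^ m), 2 * g i * pp (i + d))
        + (∑ i : Fin (2 ^ m), 2 * pp i * g (i + d))
        + (∑ i : Fin (2 ^ m), pp i * pp (i + d)) := by
    rw [← Finset.sum_add_distrib, ← Finset.sum_add_distrib]
    refine Finset.sum_congr rfl fun i _ => ?_
    rw [hg i, hg (i + d), key]
  rw [expand]
  have hB : (∑ i : Fin (2 ^ m), 2 * pp i * g (i + d))
      = (∑ j : Fin (2 ^ m), 2 * pp (j + d) * g j) := by
    refine Fintype.sum_equiv (Equiv.addRight d) _ _ fun i => ?_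
    simp only [Equiv.coe_addRight]
    have hpar : ((i + d).val + d.val) % 2 = i.val % 2 := by
      have h1 := val_add_mod_two hm1 (i + d) d
      have h2 := val_add_mod_two hm1 i d
      omega
    rw [pp_add hm1 (i + d) d, hpar, pp]
  rw [hB, ← Finset.sum_add_distrib]
  have hAB : (∑ i : Fin (2 ^ m), (2 * g i * pp (i + d) + 2 * pp (i + d) * g i)) = 0 := by
    refine Finset.sum_eq_zero fun i _ => ?_
    have : ∀ x q : ZMod 4, 2 * x * q + 2 * q * x = 0 := by decide
    exact this _ _
  rw [hAB, zero_add]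
  by_cases hd : d.val % 2 = 1
  · refine Finset.sum_eq_zero fun i _ => ?_
    rw [pp, pp_add hm1]
    by_cases h : i.val % 2 = 1
    · rw [if_pos h, if_neg (by omega), mul_zero]
    · rw [if_neg h, zero_mul]
  · have : ∀ i : Fin (2 ^ m), pp i * pp (i + d) = pp i := by
      intro i
      rw [pp, pp_add hm1]
      by_cases h : i.val % 2 = 1
      · rw [if_pos h, if_pos (by omega), one_mul]
      · rw [if_neg h, zero_mul]
    simp only [this]
    exact sum_pp hm3

lemma cf_decomp (m : ℕ) (a b : (Fin (m - 1) → ZMod 2) → ZMod 2) :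
    ∃ g : Fin (2 ^ m) → ZMod 4, ∀ k, cf m a b k = 2 * g k + pp k := by
  classical
  refine ⟨fun k =>
    ((a fun j : Fin (m - 1) => if Nat.testBit k.val (m - 1 - (j : ℕ)) then 1 else 0).val : ZMod 4)
      * (1 + ((if Nat.testBit k.val 0 then (1 : ZMod 2) else 0).val : ZMod 4)) +
    ((b fun j : Fin (m - 1) => if Nat.testBit k.val (m - 1 - (j : ℕ)) then 1 else 0).val : ZMod 4)
      * ((if Nat.testBit k.val 0 then (1 : ZMod 2) else 0).val : ZMod 4), fun k => ?_⟩
  have hY : ((if Nat.testBit k.val 0 then (1 : ZMod 2) else 0).val : ZMod 4) = pp k := by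
    rw [pp]
    simp only [Nat.testBit_zero, decide_eq_true_iff]
    split <;> decide
  rw [cf, gfun]
  dsimp only
  rw [hY]
  ring

end CfSelfOrth

theorem Cf_self_orthogonal {m : ℕ} (hm : Odd m) (hm3 : 3 ≤ m)
    (a b : (Fin (m - 1) → ZMod 2) → ZMod 2) (ha : IsBent a) (hb : IsBent b) :
    ∀ u ∈ cyclicSpan (cf m a b), ∀ v ∈ cyclicSpan (cf m a b), z4inner u v = 0 := by
  classical
  set n := 2 ^ m with hn
  set c := cf m a b with hc
  obtain ⟨g, hg⟩ := CfSelfOrth.cf_decomp m a b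
  have horth : ∀ s t : Fin n, z4inner (fun i => c (i + s)) (fun i => c (i + t)) = 0 := by
    intro s t
    have hre : z4inner (fun i => c (i + s)) (fun i => c (i + t))
        = ∑ j : Fin n, c j * c (j + (t - s)) := by
      rw [z4inner]
      refine Fintype.sum_equiv (Equiv.addRight s) _ _ fun i => ?_
      simp only [Equiv.coe_addRight]
      congr 2
      abel
    rw [hre]
    exact CfSelfOrth.core hm3 c g hg (t - s)
  have hS : ∀ u ∈ {v | ∃ t : Fin n, v = fun i => c (i + t)},
      ∀ v ∈ cyclicSpan c, z4inner u v = 0 := by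
    rintro u ⟨s, rfl⟩ v hv
    rw [cyclicSpan] at hv
    induction hv using Submodule.span_induction with
    | mem x hx =>
      obtain ⟨t, rfl⟩ := hx
      exact horth s t
    | zero => simp [z4inner]
    | add x y _ _ hx hy =>
      have : z4inner (fun i => c (i + s)) (x + y)
          = z4inner (fun i => c (i + s)) x + z4inner (fun i => c (i + s)) y := by
        simp [z4inner, mul_add, Finset.sum_add_distrib]
      rw [this, hx, hy, add_zero]
    | smul r x _ hx =>
      have : z4inner (fun i => c (i + s)) (r • x)
          = r * z4inner (fun i => c (i + s)) x := by
        simp only [z4inner, Pi.smul_apply, smul_eq_mul, Finset.mul_sum]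
        exact Finset.sum_congr rfl fun i _ => by ring
      rw [this, hx, mul_zero]
  intro u hu v hv
  rw [cyclicSpan] at hu
  induction hu using Submodule.span_induction with
  | mem x hx => exact hS x hx v hv
  | zero => simp [z4inner]
  | add x y _ _ hx hy =>
    have : z4inner (x + y) v = z4inner x v + z4inner y v := by
      simp [z4inner, add_mul, Finset.sum_add_distrib]
    rw [this, hx, hy, add_zero]
  | smul r x _ hx =>
    have : z4inner (r • x) v = r * z4inner x v := by
      simp only [z4inner, Pi.smul_apply, smul_eq_mul, Finset.mul_sum]
      exact Finset.sum_congr rfl fun i _ => by ring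
    rw [this, hx, mul_zero]
end

section
/- Let m ≥ 3 be odd and C_f the cyclic Z_4-code of length 2^m generated by the truth table c_f of a gbent function constructed from bent functions a,b : F_2^{m-1} → F_2 via f(x,y) = 2a(x)(1+y) + 2b(x)y + y. Then every codeword of C_f has Euclidean weight divisible by 8, and the residue code C_f^{(1)} = {c mod 2 : c ∈ C_f} ⊆ F_2^{2^m} has dimension 2 over F_2. -/
open Finset

/-- the residue code: coordinatewise reduction mod 2 of the codewords -/
def residueCode {n : ℕ} (C : Submodule (ZMod 4) (Fin n → ZMod 4)) :
    Submodule (ZMod 2) (Fin n → ZMod 2) :=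
  Submodule.span (ZMod 2) {y | ∃ c ∈ C, y = fun i => (((c i).val : ℕ) : ZMod 2)}

/-! ### Auxiliary material -/

namespace CfAux

def A8 (u : ZMod 4) : ZMod 8 := ((u.val ^ 2 : ℕ) : ZMod 8)
def D8 (u : ZMod 4) : ZMod 8 := ((2 * u.val : ℕ) : ZMod 8)
def L8 (u : ZMod 4) : ZMod 8 := ((u.val : ℕ) : ZMod 8)

lemma A8_add (u v : ZMod 4) : A8 (u + v) = A8 u + A8 v + D8 (u * v) := by revert u v; decide
lemma A8_mul (r u : ZMod 4) : A8 (r * u) = A8 r * A8 u := by revert r u; decide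
lemma D8_mul (r u : ZMod 4) : D8 (r * u) = L8 r * D8 u := by revert r u; decide
lemma D8_ee (α α' : ZMod 2) : D8 ((2*(α.val:ZMod 4)) * (2*(α'.val:ZMod 4))) = 0 := by
  revert α α'; decide
lemma D8_oo (β β' : ZMod 2) : D8 ((2*(β.val:ZMod 4)+1) * (2*(β'.val:ZMod 4)+1))
    = 4*((β.val:ℕ):ZMod 8) + 4*((β'.val:ℕ):ZMod 8) + 2 := by revert β β'; decide
lemma D8_eo (α β : ZMod 2) : D8 ((2*(α.val:ZMod 4)) * (2*(β.val:ZMod 4)+1))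
    = 4*((α.val:ℕ):ZMod 8) := by revert α β; decide
lemma D8_oe (β α : ZMod 2) : D8 ((2*(β.val:ZMod 4)+1) * (2*(α.val:ZMod 4)))
    = 4*((α.val:ℕ):ZMod 8) := by revert β α; decide
lemma A8_even (α : ZMod 2) : A8 (2*(α.val:ZMod 4)) = ((4*α.val : ℕ) : ZMod 8) := by
  revert α; decide
lemma A8_odd (β : ZMod 2) : A8 (2*(β.val:ZMod 4)+1) = 1 := by revert β; decide
lemma four_four (α : ZMod 2) : 4*((α.val:ℕ):ZMod 8) + 4*((α.val:ℕ):ZMod 8) = 0 := by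
  revert α; decide
lemma neg_one_pow_val (v : ZMod 2) : (-1:ℤ)^v.val = 1 - 2*(v.val:ℤ) := by revert v; decide
lemma red_add' (u v : ZMod 4) : (((u+v).val:ℕ):ZMod 2) = ((u.val:ℕ):ZMod 2)+((v.val:ℕ):ZMod 2) := by
  revert u v; decide
lemma red_mul' (r u : ZMod 4) : (((r*u).val:ℕ):ZMod 2) = ((r.val:ℕ):ZMod 2)*((u.val:ℕ):ZMod 2) := by
  revert r u; decide
lemma red_even (α : ZMod 2) : (((2*(α.val:ZMod 4)).val : ℕ) : ZMod 2) = 0 := by revert α; decide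
lemma red_odd (β : ZMod 2) : (((2*(β.val:ZMod 4)+1).val : ℕ) : ZMod 2) = 1 := by revert β; decide
lemma sq_split (u : ZMod 4) : u.val^2
    = (if u = 1 then 1 else 0) + 4*(if u = 2 then 1 else 0) + 9*(if u = 3 then 1 else 0) := by
  revert u; decide

def Xv (m k : ℕ) : Fin (m - 1) → ZMod 2 := fun j => if Nat.testBit k (m - 1 - (j:ℕ)) then 1 else 0
def sigv (m j : ℕ) : Fin (m - 1) → ZMod 2 := fun t => if Nat.testBit j (m - 2 - (t:ℕ)) then 1 else 0

lemma gfun_eval (α β y : ZMod 2) :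
    2 * (α.val : ZMod 4) * (1 + (y.val : ZMod 4)) + 2 * (β.val : ZMod 4) * (y.val : ZMod 4) + (y.val : ZMod 4)
      = if y = 0 then 2 * (α.val : ZMod 4) else 2 * (β.val : ZMod 4) + 1 := by revert α β y; decide

lemma cf_apply (m : ℕ) (a b : (Fin (m - 1) → ZMod 2) → ZMod 2) (k : Fin (2^m)) :
    cf m a b k = if k.val % 2 = 0 then 2 * ((a (Xv m k.val)).val : ZMod 4)
      else 2 * ((b (Xv m k.val)).val : ZMod 4) + 1 := by
  unfold cf gfun
  rw [gfun_eval]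
  rcases Nat.mod_two_eq_zero_or_one k.val with h | h <;>
    · simp [Nat.testBit_zero, h]
      rfl

lemma val_add_mod_two {m : ℕ} (hm : 1 ≤ m) (i u : Fin (2^m)) :
    (i + u).val % 2 = (i.val + u.val) % 2 := by
  rw [Fin.add_def]
  exact Nat.mod_mod_of_dvd _ (dvd_pow_self 2 (by omega))

lemma shift_sum {M : Type*} [AddCommMonoid M] {m : ℕ} (hm : 1 ≤ m) (u : Fin (2^m))
    (f : Fin (2^m) → M) (r s : ℕ) (hr : r < 2) (hu : u.val % 2 = s) :
    ∑ i ∈ univ.filter (fun i : Fin (2^m) => i.val % 2 = r), f (i + u)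
      = ∑ k ∈ univ.filter (fun k : Fin (2^m) => k.val % 2 = (r + s) % 2), f k := by
  refine Finset.sum_nbij' (fun i => i + u) (fun k => k - u) ?_ ?_ ?_ ?_ ?_
  · intro i hi; simp only [mem_filter, mem_univ, true_and] at *
    have := val_add_mod_two hm i u; omega
  · intro k hk; simp only [mem_filter, mem_univ, true_and] at *
    have h2 := val_add_mod_two hm (k - u) u
    rw [sub_add_cancel] at h2; omega
  · intro i _; exact add_sub_cancel_right i u
  · intro k _; exact sub_add_cancel k u
  · intro i _; rfl

lemma two_le_pow {m : ℕ} (hm : 1 ≤ m) : 2 ≤ 2^m := by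
  have := Nat.pow_le_pow_right (show 0 < 2 by norm_num) hm
  simpa using this

lemma fin_val_one {m : ℕ} (hm : 1 ≤ m) : (1 : Fin (2^m)).val = 1 := by
  rw [Fin.val_one']
  exact Nat.mod_eq_of_lt (two_le_pow hm)

lemma card_odds {m : ℕ} (hm : 1 ≤ m) :
    (univ.filter (fun i : Fin (2^m) => i.val % 2 = 1)).card = 2^(m-1) := by
  have h1 : ∑ i ∈ univ.filter (fun i : Fin (2^m) => i.val % 2 = 1), (1:ℕ)
      = ∑ k ∈ univ.filter (fun k : Fin (2^m) => k.val % 2 = 0), (1:ℕ) := by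
    have := shift_sum hm (1 : Fin (2^m)) (fun _ => (1:ℕ)) 1 1 (by norm_num)
      (by rw [fin_val_one hm])
    simpa using this
  simp only [sum_const, smul_eq_mul, mul_one] at h1
  have h2 := Finset.card_filter_add_card_filter_not
    (s := (univ : Finset (Fin (2^m)))) (p := fun i => i.val % 2 = 1)
  have h3 : univ.filter (fun i : Fin (2^m) => ¬ (i.val % 2 = 1))
      = univ.filter (fun i => i.val % 2 = 0) := by
    apply Finset.filter_congr; intro i _; omega
  rw [h3, Finset.card_univ, Fintype.card_fin] at h2
  have hpow : 2^m = 2 * 2^(m-1) := by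
    conv_lhs => rw [show m = (m-1)+1 by omega]
    ring
  omega

lemma sig_bij {m : ℕ} (hm : 3 ≤ m) :
    Function.Bijective (fun j : Fin (2^(m-1)) => sigv m j.val) := by
  rw [Fintype.bijective_iff_injective_and_card]
  constructor
  · intro j j' h
    apply Fin.val_injective
    apply Nat.eq_of_testBit_eq
    intro s
    by_cases hs : s ≤ m - 2
    · have ht : m - 2 - s < m - 1 := by omega
      have := congrFun h ⟨m - 2 - s, ht⟩
      simp only [sigv] at this
      rw [show m - 2 - (m - 2 - s) = s by omega] at this
      by_cases h1 : Nat.testBit j.val s <;> by_cases h2 : Nat.testBit j'.val s <;>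
        simp_all
    · have hb : ∀ x : Fin (2^(m-1)), Nat.testBit x.val s = false := by
        intro x
        apply Nat.testBit_eq_false_of_lt
        calc x.val < 2^(m-1) := x.isLt
          _ ≤ 2^s := Nat.pow_le_pow_right (by norm_num) (by omega)
      rw [hb j, hb j']
  · simp [ZMod.card]

lemma sum_evens {M : Type*} [AddCommMonoid M] {m : ℕ} (hm : 3 ≤ m)
    (F : (Fin (m-1) → ZMod 2) → M) :
    ∑ i ∈ univ.filter (fun i : Fin (2^m) => i.val % 2 = 0), F (Xv m i.val)
      = ∑ x : Fin (m-1) → ZMod 2, F x := by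
  have hpow : 2^m = 2 * 2^(m-1) := by
    conv_lhs => rw [show m = (m-1)+1 by omega]
    ring
  have step1 : ∑ i ∈ univ.filter (fun i : Fin (2^m) => i.val % 2 = 0), F (Xv m i.val)
      = ∑ j : Fin (2^(m-1)), F (sigv m j.val) := by
    refine Finset.sum_nbij' (fun i => (⟨i.val / 2, by omega⟩ : Fin (2^(m-1))))
      (fun j => (⟨2 * j.val, by omega⟩ : Fin (2^m))) ?_ ?_ ?_ ?_ ?_
    · intro i _; exact mem_univ _
    · intro j _; simp only [mem_filter, mem_univ, true_and]; omega
    · intro i hi; simp only [mem_filter, mem_univ, true_and] at hi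
      apply Fin.val_injective; simp; omega
    · intro j _; apply Fin.val_injective; simp
    · intro i hi
      congr 1
      funext t
      simp only [Xv, sigv]
      rw [show m - 1 - (t:ℕ) = (m - 2 - (t:ℕ)) + 1 by omega, Nat.testBit_succ]
  rw [step1]
  exact Fintype.sum_bijective _ (sig_bij hm) _ _ (fun j => rfl)

lemma key_dvd {m : ℕ} (hm : Odd m) (hm3 : 3 ≤ m) (a : (Fin (m-1) → ZMod 2) → ZMod 2)
    (ha : IsBent a) : 8 ∣ (∑ x : Fin (m-1) → ZMod 2, 4 * (a x).val) + 2^(m-1) := by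
  obtain ⟨k, hk⟩ := hm
  have hk1 : 1 ≤ k := by omega
  have hcard : Fintype.card (Fin (m-1) → ZMod 2) = 2^(m-1) := by simp [ZMod.card]
  have hw : walsh a 0 = 2^(m-1) - 2 * ∑ x, ((a x).val : ℤ) := by
    unfold walsh
    have h1 : ∀ x : Fin (m-1) → ZMod 2,
        (-1:ℤ) ^ (a x + ∑ i, (0 : Fin (m-1) → ZMod 2) i * x i).val = 1 - 2*((a x).val : ℤ) := by
      intro x
      simp only [Pi.zero_apply, zero_mul, Finset.sum_const_zero, add_zero]
      exact neg_one_pow_val _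
    rw [Finset.sum_congr rfl (fun x _ => h1 x), Finset.sum_sub_distrib,
      Finset.sum_const, ← Finset.mul_sum, Finset.card_univ, hcard]
    simp
  suffices h : (8:ℤ) ∣ (((∑ x : Fin (m-1) → ZMod 2, 4 * (a x).val) + 2^(m-1) : ℕ) : ℤ) by
    exact_mod_cast h
  have hsum : (((∑ x : Fin (m-1) → ZMod 2, 4 * (a x).val) + 2^(m-1) : ℕ) : ℤ)
      = 4 * (∑ x, ((a x).val : ℤ)) + 2^(m-1) := by push_cast [Finset.mul_sum]; ring
  rw [hsum]
  set T : ℤ := ∑ x, ((a x).val : ℤ) with hT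
  have hm1 : m - 1 = 2*k := by omega
  have hhalf : (m-1)/2 = k := by omega
  have e1 : (2:ℤ)^(m-1) = 2^(2*k) := by rw [hm1]
  rcases ha 0 with h | h <;> rw [hw, hhalf, e1] at h
  · have h4 : 4*T + (2:ℤ)^(m-1) = 2^(2*k+1) + 2^(2*k) - 2^(k+1) := by
      rw [e1]
      have e2 : (2:ℤ)^(2*k+1) = 2*2^(2*k) := by ring
      have e3 : (2:ℤ)^(k+1) = 2*2^k := by ring
      rw [e2, e3]; linarith
    rw [h4]
    by_cases hk2 : 2 ≤ k
    · rw [show (8:ℤ) = 2^3 by norm_num]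
      exact dvd_sub (dvd_add (pow_dvd_pow 2 (by omega)) (pow_dvd_pow 2 (by omega)))
        (pow_dvd_pow 2 (by omega))
    · have : k = 1 := by omega
      subst this; norm_num
  · have h4 : 4*T + (2:ℤ)^(m-1) = 2^(2*k+1) + 2^(2*k) + 2^(k+1) := by
      rw [e1]
      have e2 : (2:ℤ)^(2*k+1) = 2*2^(2*k) := by ring
      have e3 : (2:ℤ)^(k+1) = 2*2^k := by ring
      rw [e2, e3]; linarith
    rw [h4]
    by_cases hk2 : 2 ≤ k
    · rw [show (8:ℤ) = 2^3 by norm_num]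
      exact dvd_add (dvd_add (pow_dvd_pow 2 (by omega)) (pow_dvd_pow 2 (by omega)))
        (pow_dvd_pow 2 (by omega))
    · have : k = 1 := by omega
      subst this; norm_num

lemma Q_cf {m : ℕ} (hm : Odd m) (hm3 : 3 ≤ m) (a b : (Fin (m-1) → ZMod 2) → ZMod 2)
    (ha : IsBent a) : ∑ i : Fin (2^m), A8 (cf m a b i) = 0 := by
  have hm1 : (1:ℕ) ≤ m := by omega
  rw [← Finset.sum_filter_add_sum_filter_not univ (fun i : Fin (2^m) => i.val % 2 = 0)]
  have he : ∑ i ∈ univ.filter (fun i : Fin (2^m) => i.val % 2 = 0), A8 (cf m a b i)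
      = ∑ x : Fin (m-1) → ZMod 2, ((4 * (a x).val : ℕ) : ZMod 8) := by
    rw [← sum_evens hm3 (fun x => ((4 * (a x).val : ℕ) : ZMod 8))]
    refine Finset.sum_congr rfl fun i hi => ?_
    simp only [mem_filter, mem_univ, true_and] at hi
    rw [cf_apply, if_pos hi]
    exact A8_even _
  have ho : ∑ i ∈ univ.filter (fun i : Fin (2^m) => ¬ i.val % 2 = 0), A8 (cf m a b i)
      = ((2^(m-1) : ℕ) : ZMod 8) := by
    have hstep : ∀ i ∈ univ.filter (fun i : Fin (2^m) => ¬ i.val % 2 = 0),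
        A8 (cf m a b i) = 1 := by
      intro i hi
      simp only [mem_filter, mem_univ, true_and] at hi
      rw [cf_apply, if_neg hi]
      exact A8_odd _
    rw [Finset.sum_congr rfl hstep, Finset.sum_const]
    have h3 : univ.filter (fun i : Fin (2^m) => ¬ (i.val % 2 = 0))
        = univ.filter (fun i => i.val % 2 = 1) := by
      apply Finset.filter_congr; intro i _; omega
    rw [h3, card_odds hm1, nsmul_eq_mul, mul_one]
  rw [he, ho, ← Nat.cast_sum, ← Nat.cast_add, ZMod.natCast_eq_zero_iff]
  exact key_dvd hm hm3 a ha

lemma pow_dvd8 {m : ℕ} (hm3 : 3 ≤ m) : (8:ℕ) ∣ 2^m :=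
  ⟨2^(m-3), by rw [show m = 3 + (m-3) by omega, pow_add]; norm_num⟩

lemma B_cf {m : ℕ} (hm3 : 3 ≤ m) (a b : (Fin (m-1) → ZMod 2) → ZMod 2) (u : Fin (2^m)) :
    ∑ i : Fin (2^m), D8 (cf m a b i * cf m a b (i + u)) = 0 := by
  have hm1 : (1:ℕ) ≤ m := by omega
  rw [← Finset.sum_filter_add_sum_filter_not univ (fun i : Fin (2^m) => i.val % 2 = 0)]
  have hodds : univ.filter (fun i : Fin (2^m) => ¬ (i.val % 2 = 0))
      = univ.filter (fun i => i.val % 2 = 1) := by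
    apply Finset.filter_congr; intro i _; omega
  rcases Nat.mod_two_eq_zero_or_one u.val with hu | hu
  · -- u even
    have he : ∑ i ∈ univ.filter (fun i : Fin (2^m) => i.val % 2 = 0),
        D8 (cf m a b i * cf m a b (i+u)) = 0 := by
      refine Finset.sum_eq_zero fun i hi => ?_
      simp only [mem_filter, mem_univ, true_and] at hi
      have h2 : (i+u).val % 2 = 0 := by have := val_add_mod_two hm1 i u; omega
      rw [cf_apply m a b i, cf_apply m a b (i+u), if_pos hi, if_pos h2]
      exact D8_ee _ _
    have ho : ∑ i ∈ univ.filter (fun i : Fin (2^m) => ¬ (i.val % 2 = 0)),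
        D8 (cf m a b i * cf m a b (i+u))
        = ∑ i ∈ univ.filter (fun i : Fin (2^m) => i.val % 2 = 1),
            (4*(((b (Xv m i.val)).val:ℕ):ZMod 8) + 4*(((b (Xv m (i+u).val)).val:ℕ):ZMod 8) + 2) := by
      rw [hodds]
      refine Finset.sum_congr rfl fun i hi => ?_
      simp only [mem_filter, mem_univ, true_and] at hi
      have h2 : (i+u).val % 2 = 1 := by have := val_add_mod_two hm1 i u; omega
      rw [cf_apply m a b i, cf_apply m a b (i+u), if_neg (by omega), if_neg (by omega)]
      exact D8_oo _ _
    rw [he, ho, zero_add, Finset.sum_add_distrib, Finset.sum_add_distrib, Finset.sum_const]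
    have hs : ∑ i ∈ univ.filter (fun i : Fin (2^m) => i.val % 2 = 1),
        (4*(((b (Xv m (i+u).val)).val:ℕ):ZMod 8))
        = ∑ i ∈ univ.filter (fun i : Fin (2^m) => i.val % 2 = 1),
            (4*(((b (Xv m i.val)).val:ℕ):ZMod 8)) := by
      have := shift_sum hm1 u (fun k => (4*(((b (Xv m k.val)).val:ℕ):ZMod 8))) 1 0
        (by norm_num) hu
      simpa using this
    rw [hs, ← Finset.sum_add_distrib, Finset.sum_eq_zero (fun i _ => four_four _), zero_add,
      card_odds hm1, nsmul_eq_mul]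
    rw [show ((2^(m-1):ℕ):ZMod 8) * 2 = ((2^(m-1)*2 : ℕ) : ZMod 8) by push_cast; ring]
    rw [ZMod.natCast_eq_zero_iff]
    rw [show 2^(m-1)*2 = 2^m by rw [← pow_succ]; congr 1; omega]
    exact pow_dvd8 hm3
  · -- u odd
    have he : ∑ i ∈ univ.filter (fun i : Fin (2^m) => i.val % 2 = 0),
        D8 (cf m a b i * cf m a b (i+u))
        = ∑ i ∈ univ.filter (fun i : Fin (2^m) => i.val % 2 = 0),
            (4*(((a (Xv m i.val)).val:ℕ):ZMod 8)) := by
      refine Finset.sum_congr rfl fun i hi => ?_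
      simp only [mem_filter, mem_univ, true_and] at hi
      have h2 : (i+u).val % 2 = 1 := by have := val_add_mod_two hm1 i u; omega
      rw [cf_apply m a b i, cf_apply m a b (i+u), if_pos hi, if_neg (by omega)]
      exact D8_eo _ _
    have ho : ∑ i ∈ univ.filter (fun i : Fin (2^m) => ¬ (i.val % 2 = 0)),
        D8 (cf m a b i * cf m a b (i+u))
        = ∑ i ∈ univ.filter (fun i : Fin (2^m) => i.val % 2 = 1),
            (4*(((a (Xv m (i+u).val)).val:ℕ):ZMod 8)) := by
      rw [hodds]
      refine Finset.sum_congr rfl fun i hi => ?_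
      simp only [mem_filter, mem_univ, true_and] at hi
      have h2 : (i+u).val % 2 = 0 := by have := val_add_mod_two hm1 i u; omega
      rw [cf_apply m a b i, cf_apply m a b (i+u), if_neg (by omega), if_pos h2]
      exact D8_oe _ _
    have hs : ∑ i ∈ univ.filter (fun i : Fin (2^m) => i.val % 2 = 1),
        (4*(((a (Xv m (i+u).val)).val:ℕ):ZMod 8))
        = ∑ i ∈ univ.filter (fun i : Fin (2^m) => i.val % 2 = 0),
            (4*(((a (Xv m i.val)).val:ℕ):ZMod 8)) := by
      have := shift_sum hm1 u (fun k => (4*(((a (Xv m k.val)).val:ℕ):ZMod 8))) 1 1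
        (by norm_num) hu
      simpa using this
    rw [he, ho, hs, ← Finset.sum_add_distrib]
    exact Finset.sum_eq_zero (fun i _ => four_four _)

/-! ### quadratic/bilinear forms on `Z4^n` -/

def Qq {n : ℕ} (c : Fin n → ZMod 4) : ZMod 8 := ∑ i, A8 (c i)
def Bq {n : ℕ} (c d : Fin n → ZMod 4) : ZMod 8 := ∑ i, D8 (c i * d i)

lemma Qq_add {n : ℕ} (c d : Fin n → ZMod 4) : Qq (c + d) = Qq c + Qq d + Bq c d := by
  unfold Qq Bq
  rw [← Finset.sum_add_distrib, ← Finset.sum_add_distrib]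
  exact Finset.sum_congr rfl fun i _ => by simpa using A8_add (c i) (d i)

lemma Qq_smul {n : ℕ} (r : ZMod 4) (c : Fin n → ZMod 4) : Qq (r • c) = A8 r * Qq c := by
  unfold Qq
  rw [Finset.mul_sum]
  exact Finset.sum_congr rfl fun i _ => by
    simpa [smul_eq_mul] using A8_mul r (c i)

lemma Bq_add_left {n : ℕ} (c c' d : Fin n → ZMod 4) : Bq (c + c') d = Bq c d + Bq c' d := by
  unfold Bq
  rw [← Finset.sum_add_distrib]
  refine Finset.sum_congr rfl fun i _ => ?_
  have : (c + c') i * d i = c i * d i + c' i * d i := by simp [add_mul]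
  rw [this]
  have hD : ∀ u v : ZMod 4, D8 (u + v) = D8 u + D8 v := by decide
  exact hD _ _

lemma Bq_smul_left {n : ℕ} (r : ZMod 4) (c d : Fin n → ZMod 4) :
    Bq (r • c) d = L8 r * Bq c d := by
  unfold Bq
  rw [Finset.mul_sum]
  refine Finset.sum_congr rfl fun i _ => ?_
  have : (r • c) i * d i = r * (c i * d i) := by simp [smul_eq_mul, mul_assoc]
  rw [this]
  exact D8_mul _ _

lemma Bq_zero_left {n : ℕ} (d : Fin n → ZMod 4) : Bq 0 d = 0 := by
  unfold Bq
  refine Finset.sum_eq_zero fun i _ => ?_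
  simp only [Pi.zero_apply, zero_mul]
  decide

lemma Bq_comm {n : ℕ} (c d : Fin n → ZMod 4) : Bq c d = Bq d c := by
  unfold Bq
  exact Finset.sum_congr rfl fun i _ => by rw [mul_comm]

lemma Qq_zero {n : ℕ} : Qq (0 : Fin n → ZMod 4) = 0 := by
  unfold Qq
  refine Finset.sum_eq_zero fun i _ => ?_
  simp only [Pi.zero_apply]
  decide

lemma Qq_shift {m : ℕ} (a b : (Fin (m-1) → ZMod 2) → ZMod 2) (t : Fin (2^m)) :
    Qq (fun i => cf m a b (i + t)) = ∑ i : Fin (2^m), A8 (cf m a b i) :=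
  Fintype.sum_equiv (Equiv.addRight t) _ _ (fun i => rfl)

lemma Bq_gen {m : ℕ} (hm3 : 3 ≤ m) (a b : (Fin (m-1) → ZMod 2) → ZMod 2)
    (s t : Fin (2^m)) :
    Bq (fun i => cf m a b (i+s)) (fun i => cf m a b (i+t)) = 0 := by
  have key : Bq (fun i => cf m a b (i+s)) (fun i => cf m a b (i+t))
      = ∑ i : Fin (2^m), D8 (cf m a b i * cf m a b (i + (t - s))) := by
    refine Fintype.sum_equiv (Equiv.addRight s) _ _ fun i => ?_
    simp only [Equiv.coe_addRight]
    rw [show (i + s) + (t - s) = i + t by abel]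
  rw [key]
  exact B_cf hm3 a b _

lemma span_props {m : ℕ} (hm : Odd m) (hm3 : 3 ≤ m)
    (a b : (Fin (m-1) → ZMod 2) → ZMod 2) (ha : IsBent a) :
    ∀ c ∈ cyclicSpan (cf m a b), Qq c = 0 := by
  have hB : ∀ y : Fin (2^m) → ZMod 4,
      (∀ t : Fin (2^m), Bq (fun i => cf m a b (i + t)) y = 0) →
      ∀ x ∈ cyclicSpan (cf m a b), Bq x y = 0 := by
    intro y hy x hx
    induction hx using Submodule.span_induction with
    | mem x hxs => obtain ⟨t, rfl⟩ := hxs; exact hy t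
    | zero => exact Bq_zero_left y
    | add x z hx hz h1 h2 => rw [Bq_add_left, h1, h2, add_zero]
    | smul r x hx h => rw [Bq_smul_left, h, mul_zero]
  intro c hc
  have main : Qq c = 0 ∧ ∀ t : Fin (2^m), Bq c (fun i => cf m a b (i + t)) = 0 := by
    induction hc using Submodule.span_induction with
    | mem x hxs =>
        obtain ⟨s, rfl⟩ := hxs
        refine ⟨?_, fun t => Bq_gen hm3 a b s t⟩
        rw [Qq_shift a b s]
        exact Q_cf hm hm3 a b ha
    | zero => exact ⟨Qq_zero, fun t => Bq_zero_left _⟩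
    | add x z hx hz h1 h2 =>
        refine ⟨?_, fun t => by rw [Bq_add_left, h1.2 t, h2.2 t, add_zero]⟩
        rw [Qq_add, h1.1, h2.1, zero_add, zero_add]
        exact hB z (fun t => by rw [Bq_comm]; exact h2.2 t) x hx
    | smul r x hx h =>
        exact ⟨by rw [Qq_smul, h.1, mul_zero],
          fun t => by rw [Bq_smul_left, h.2 t, mul_zero]⟩
  exact main.1

lemma wtE_cast {n : ℕ} (c : Fin n → ZMod 4) : ((wtE c : ℕ) : ZMod 8) = Qq c := by
  have h1 : wtE c + 8 * nCount c 3 = ∑ i, (c i).val^2 := by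
    have h2 : ∑ i : Fin n, (c i).val^2
        = ∑ i : Fin n, ((if c i = 1 then 1 else 0) + 4*(if c i = 2 then 1 else 0)
            + 9*(if c i = 3 then 1 else 0)) :=
      Finset.sum_congr rfl fun i _ => sq_split (c i)
    rw [h2, Finset.sum_add_distrib, Finset.sum_add_distrib, ← Finset.mul_sum, ← Finset.mul_sum]
    unfold wtE nCount
    rw [Finset.card_filter, Finset.card_filter, Finset.card_filter]
    ring
  have h3 : ((wtE c + 8 * nCount c 3 : ℕ) : ZMod 8) = ((wtE c : ℕ) : ZMod 8) := by
    push_cast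
    rw [show ((8:ZMod 8)) = 0 from rfl, zero_mul, add_zero]
  rw [← h3, h1, Nat.cast_sum]
  rfl

/-! ### residue code -/

def red {n : ℕ} (c : Fin n → ZMod 4) : Fin n → ZMod 2 := fun i => (((c i).val : ℕ) : ZMod 2)

lemma red_addf {n : ℕ} (c d : Fin n → ZMod 4) : red (c + d) = red c + red d := by
  funext i
  simp only [red, Pi.add_apply]
  exact red_add' _ _

lemma red_smulf {n : ℕ} (r : ZMod 4) (c : Fin n → ZMod 4) :
    red (r • c) = (((r.val:ℕ):ZMod 2)) • red c := by
  funext i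
  simp only [red, Pi.smul_apply, smul_eq_mul]
  exact red_mul' _ _

lemma red_zerof {n : ℕ} : red (0 : Fin n → ZMod 4) = 0 := by
  funext i
  simp [red]

def w0 (m : ℕ) : Fin (2^m) → ZMod 2 := fun i => ((i.val : ℕ) : ZMod 2)
def w1 (m : ℕ) : Fin (2^m) → ZMod 2 := fun i => ((i.val : ℕ) : ZMod 2) + 1

lemma cast_mod_pow {m : ℕ} (hm : 1 ≤ m) (x : ℕ) : ((x % 2^m : ℕ) : ZMod 2) = (x : ZMod 2) := by
  have hd : ((2^m : ℕ) : ZMod 2) = 0 :=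
    (ZMod.natCast_eq_zero_iff _ 2).mpr (dvd_pow_self 2 (by omega))
  conv_rhs => rw [← Nat.mod_add_div x (2^m)]
  rw [Nat.cast_add, Nat.cast_mul, hd, zero_mul, add_zero]

lemma red_cf_k {m : ℕ} (a b : (Fin (m-1) → ZMod 2) → ZMod 2) (k : Fin (2^m)) :
    (((cf m a b k).val : ℕ) : ZMod 2) = ((k.val : ℕ) : ZMod 2) := by
  rcases Nat.mod_two_eq_zero_or_one k.val with h | h
  · rw [cf_apply, if_pos h, red_even]
    exact ((ZMod.natCast_eq_zero_iff _ 2).mpr (Nat.dvd_of_mod_eq_zero h)).symm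
  · rw [cf_apply, if_neg (by omega), red_odd]
    have : ((k.val : ℕ) : ZMod 2) = ((k.val % 2 : ℕ) : ZMod 2) := (ZMod.natCast_mod _ 2).symm
    rw [this, h, Nat.cast_one]

lemma red_gen {m : ℕ} (hm1 : 1 ≤ m) (a b : (Fin (m-1) → ZMod 2) → ZMod 2) (t : Fin (2^m)) :
    red (fun i => cf m a b (i + t))
      = fun i : Fin (2^m) => ((i.val:ℕ):ZMod 2) + ((t.val:ℕ):ZMod 2) := by
  funext i
  show (((cf m a b (i+t)).val : ℕ) : ZMod 2) = _
  rw [red_cf_k a b]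
  rw [Fin.add_def]
  show (((i.val + t.val) % 2^m : ℕ) : ZMod 2) = _
  rw [cast_mod_pow hm1, Nat.cast_add]

lemma residue_eq {m : ℕ} (hm3 : 3 ≤ m) (a b : (Fin (m-1) → ZMod 2) → ZMod 2) :
    residueCode (cyclicSpan (cf m a b)) = Submodule.span (ZMod 2) {w0 m, w1 m} := by
  have hm1 : (1:ℕ) ≤ m := by omega
  unfold residueCode
  apply le_antisymm
  · rw [Submodule.span_le]
    rintro y ⟨c, hc, rfl⟩
    show red c ∈ (Submodule.span (ZMod 2) {w0 m, w1 m} : Set _)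
    induction hc using Submodule.span_induction with
    | mem x hxs =>
        obtain ⟨t, rfl⟩ := hxs
        rw [red_gen hm1 a b t]
        rcases Nat.mod_two_eq_zero_or_one t.val with h | h
        · have hw : (fun i : Fin (2^m) => ((i.val:ℕ):ZMod 2) + ((t.val:ℕ):ZMod 2)) = w0 m := by
            funext i
            rw [show ((t.val:ℕ):ZMod 2) = 0 from
              (ZMod.natCast_eq_zero_iff _ 2).mpr (Nat.dvd_of_mod_eq_zero h), add_zero]
            rfl
          rw [hw]
          exact Submodule.subset_span (Set.mem_insert _ _)
        · have hw : (fun i : Fin (2^m) => ((i.val:ℕ):ZMod 2) + ((t.val:ℕ):ZMod 2)) = w1 m := by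
            funext i
            rw [show ((t.val:ℕ):ZMod 2) = 1 by
              rw [(ZMod.natCast_mod t.val 2).symm, h, Nat.cast_one]]
            rfl
          rw [hw]
          exact Submodule.subset_span (Set.mem_insert_of_mem _ rfl)
    | zero =>
        show red 0 ∈ _
        rw [red_zerof]
        exact Submodule.zero_mem _
    | add x z hx hz h1 h2 =>
        show red (x + z) ∈ _
        rw [red_addf]
        exact Submodule.add_mem _ h1 h2
    | smul r x hx h =>
        show red (r • x) ∈ _
        rw [red_smulf]
        exact Submodule.smul_mem _ _ h
  · rw [Submodule.span_le]
    intro y hy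
    simp only [Set.mem_insert_iff, Set.mem_singleton_iff] at hy
    rcases hy with rfl | rfl
    · apply Submodule.subset_span
      refine ⟨cf m a b, Submodule.subset_span ⟨0, funext fun i => by rw [add_zero]⟩, ?_⟩
      funext i
      exact (red_cf_k a b i).symm
    · apply Submodule.subset_span
      refine ⟨fun i => cf m a b (i + 1), Submodule.subset_span ⟨1, rfl⟩, ?_⟩
      have := red_gen hm1 a b (1 : Fin (2^m))
      funext i
      have h2 := congrFun this i
      show w1 m i = red (fun i => cf m a b (i + 1)) i
      rw [h2, fin_val_one hm1, Nat.cast_one]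
      rfl

lemma pair_li {m : ℕ} (hm3 : 3 ≤ m) : LinearIndependent (ZMod 2) ![w0 m, w1 m] := by
  rw [LinearIndependent.pair_iff]
  intro s t h
  have hz : ∀ z : ZMod 2, z = 0 ∨ z = 1 := by decide
  have h1lt : 1 < 2^m := by have := two_le_pow (show (1:ℕ) ≤ m by omega); omega
  have h0lt : 0 < 2^m := by omega
  rcases hz s with rfl | rfl <;> rcases hz t with rfl | rfl
  · exact ⟨rfl, rfl⟩
  · exfalso
    have := congrFun h (⟨0, h0lt⟩ : Fin (2^m))
    simp [w0, w1] at this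
  · exfalso
    have := congrFun h (⟨1, h1lt⟩ : Fin (2^m))
    simp [w0, w1] at this
  · exfalso
    have := congrFun h (⟨0, h0lt⟩ : Fin (2^m))
    simp [w0, w1] at this

lemma range_pair {m : ℕ} : Set.range ![w0 m, w1 m] = {w0 m, w1 m} := by
  ext y
  simp only [Set.mem_range, Fin.exists_fin_two, Matrix.cons_val_zero, Matrix.cons_val_one,
    Matrix.head_cons, Set.mem_insert_iff, Set.mem_singleton_iff, eq_comm]

end CfAux

open CfAux

theorem Cf_weights_and_residue_dim {m : ℕ} (hm : Odd m) (hm3 : 3 ≤ m)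
    (a b : (Fin (m - 1) → ZMod 2) → ZMod 2) (ha : IsBent a) (hb : IsBent b) :
    (∀ c ∈ cyclicSpan (cf m a b), 8 ∣ wtE c) ∧
    Module.finrank (ZMod 2) (residueCode (cyclicSpan (cf m a b))) = 2 := by
  constructor
  · intro c hc
    refine (ZMod.natCast_eq_zero_iff (wtE c) 8).mp ?_
    rw [wtE_cast]
    exact span_props hm hm3 a b ha c hc
  · rw [residue_eq hm3 a b, ← range_pair]
    have := finrank_span_eq_card (pair_li hm3)
    simpa using this
end

section
/- If C is a self-dual Z_4-code of length n, then its residue code C^{(1)} is a doubly even binary code and C^{(1)} equals the dual of the torsion code: C^{(1)} = (C^{(2)})^⊥. -/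
open Finset

def wtB {n : ℕ} (y : Fin n → ZMod 2) : ℕ :=
  (Finset.univ.filter (fun i => y i ≠ 0)).card

/-- lift of a binary vector to `Z_4` with entries in `{0,1}` -/
def liftB {n : ℕ} (y : Fin n → ZMod 2) : Fin n → ZMod 4 :=
  fun i => (((y i).val : ℕ) : ZMod 4)

/-- coordinatewise reduction mod 2 -/
def res2 {n : ℕ} (c : Fin n → ZMod 4) : Fin n → ZMod 2 :=
  fun i => (((c i).val : ℕ) : ZMod 2)
/-!
Odd squares in `ℤ/4` are `1` and even squares `0`, so `c · c` is the weight of the residue of `c`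
read mod 4; self-orthogonality therefore makes every residue doubly even. For binary `t`, the
product `c · 2t̃` equals `2 (c̄ · t)`, which vanishes in `ℤ/4` exactly when `c̄ · t = 0` in `𝔽₂`.
Self-duality thus identifies the torsion code with the dual of the residue code, and taking duals
once more (the binary dot product is non-degenerate) gives the residue code as the dual of the
torsion code.
-/

open Matrix

section DotProduct

variable {R ι : Type*} [CommSemiring R] [Fintype ι]

lemma dotProductBilin_isRefl : (dotProductBilin R R : LinearMap.BilinForm R (ι → R)).IsRefl :=
  fun x y h => (dotProduct_comm y x).trans h

lemma dotProductBilin_nondegenerate :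
    (dotProductBilin R R : LinearMap.BilinForm R (ι → R)).Nondegenerate :=
  ⟨fun x hx => dotProduct_eq_zero x hx,
    fun y hy => dotProduct_eq_zero y fun x => (dotProduct_comm y x).trans (hy x)⟩

end DotProduct

namespace Z4Code

variable {n : ℕ}

abbrev reduce : ZMod 4 →+* ZMod 2 := ZMod.castHom (by norm_num) (ZMod 2)

lemma reduce_apply (a : ZMod 4) : reduce a = (a.val : ZMod 2) := by
  revert a; decide

lemma res2_apply (c : Fin n → ZMod 4) (i : Fin n) : res2 c i = reduce (c i) :=
  (reduce_apply (c i)).symm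

lemma reduce_liftB (t : Fin n → ZMod 2) (i : Fin n) : reduce (liftB t i) = t i := by
  unfold liftB; generalize t i = a; revert a; decide

lemma mul_self_eq_ite_reduce (a : ZMod 4) : a * a = if reduce a = 0 then 0 else 1 := by
  revert a; decide

lemma two_mul_eq_zero_iff_reduce (a : ZMod 4) : 2 * a = 0 ↔ reduce a = 0 := by
  revert a; decide

lemma z4inner_eq_dotProduct (x y : Fin n → ZMod 4) : z4inner x y = x ⬝ᵥ y := rfl

lemma z4inner_self_eq_wtB (c : Fin n → ZMod 4) : z4inner c c = (wtB (res2 c) : ZMod 4) := by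
  simp only [z4inner, wtB, mul_self_eq_ite_reduce, res2_apply, Finset.sum_ite,
    Finset.sum_const_zero, Finset.sum_const, nsmul_eq_mul, mul_one, zero_add]

lemma four_dvd_wtB_res2 {c : Fin n → ZMod 4} (hc : z4inner c c = 0) : 4 ∣ wtB (res2 c) := by
  rwa [z4inner_self_eq_wtB, ZMod.natCast_eq_zero_iff] at hc

lemma z4inner_two_smul_liftB_eq_zero_iff (t : Fin n → ZMod 2) (c : Fin n → ZMod 4) :
    z4inner ((2 : ZMod 4) • liftB t) c = 0 ↔ t ⬝ᵥ res2 c = 0 := by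
  rw [z4inner_eq_dotProduct, smul_dotProduct, smul_eq_mul, two_mul_eq_zero_iff_reduce,
    dotProduct, dotProduct, map_sum]
  simp only [map_mul, reduce_liftB, res2_apply]

def res2Hom : (Fin n → ZMod 4) →+ (Fin n → ZMod 2) where
  toFun := res2
  map_zero' := by funext i; rw [res2_apply]; simp
  map_add' c d := by funext i; simp only [res2_apply, Pi.add_apply, map_add]

lemma two_mul_natCast_val_add (a b : ZMod 2) :
    (2 : ZMod 4) * ((a + b).val : ZMod 4) = 2 * (a.val : ZMod 4) + 2 * (b.val : ZMod 4) := by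
  revert a b; decide

def twoLiftHom : (Fin n → ZMod 2) →+ (Fin n → ZMod 4) where
  toFun t := (2 : ZMod 4) • liftB t
  map_zero' := by funext i; simp [liftB]
  map_add' s t := by
    funext i
    simp only [liftB, Pi.smul_apply, Pi.add_apply, smul_eq_mul]
    exact two_mul_natCast_val_add (s i) (t i)

def residueCode (C : Submodule (ZMod 4) (Fin n → ZMod 4)) : Submodule (ZMod 2) (Fin n → ZMod 2) :=
  AddSubgroup.toZModSubmodule 2 (C.toAddSubgroup.map res2Hom)

def torsionCode (C : Submodule (ZMod 4) (Fin n → ZMod 4)) : Submodule (ZMod 2) (Fin n → ZMod 2) :=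
  AddSubgroup.toZModSubmodule 2 (C.toAddSubgroup.comap twoLiftHom)

variable {C : Submodule (ZMod 4) (Fin n → ZMod 4)}

lemma mem_residueCode {y : Fin n → ZMod 2} :
    y ∈ residueCode C ↔ ∃ c ∈ C, res2 c = y :=
  AddSubgroup.mem_map

lemma mem_torsionCode {t : Fin n → ZMod 2} :
    t ∈ torsionCode C ↔ (2 : ZMod 4) • liftB t ∈ C := Iff.rfl

variable (n) in
abbrev binaryDotForm : LinearMap.BilinForm (ZMod 2) (Fin n → ZMod 2) :=
  dotProductBilin (ZMod 2) (ZMod 2)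

theorem torsionCode_eq_orthogonal_residueCode
    (hsd : ∀ x, x ∈ C ↔ ∀ y ∈ C, z4inner x y = 0) :
    torsionCode C = (binaryDotForm n).orthogonal (residueCode C) := by
  ext t
  rw [mem_torsionCode, hsd, LinearMap.BilinForm.mem_orthogonal_iff]
  simp only [mem_residueCode, dotProductBilin_apply_apply, forall_exists_index, and_imp,
    forall_apply_eq_imp_iff₂, z4inner_two_smul_liftB_eq_zero_iff, dotProduct_comm t]

theorem residueCode_eq_orthogonal_torsionCode
    (hsd : ∀ x, x ∈ C ↔ ∀ y ∈ C, z4inner x y = 0) :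
    residueCode C = (binaryDotForm n).orthogonal (torsionCode C) := by
  rw [torsionCode_eq_orthogonal_residueCode hsd,
    LinearMap.BilinForm.orthogonal_orthogonal (B := binaryDotForm n)
      dotProductBilin_nondegenerate dotProductBilin_isRefl]

end Z4Code

open Z4Code in
theorem selfdual_residue_doubly_even_and_dual_torsion {n : ℕ}
    (C : Submodule (ZMod 4) (Fin n → ZMod 4))
    (hsd : ∀ x, x ∈ C ↔ ∀ y ∈ C, z4inner x y = 0) :
    (∀ c ∈ C, 4 ∣ wtB (res2 c)) ∧
    (∀ y : Fin n → ZMod 2,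
      (∃ c ∈ C, y = res2 c) ↔
        ∀ t : Fin n → ZMod 2, (2 : ZMod 4) • liftB t ∈ C → ∑ i : Fin n, y i * t i = 0) := by
  refine ⟨fun c hc => four_dvd_wtB_res2 ((hsd c).1 hc c hc), fun y => ?_⟩
  simp only [eq_comm (a := y), ← mem_residueCode, residueCode_eq_orthogonal_torsionCode hsd,
    LinearMap.BilinForm.mem_orthogonal_iff, mem_torsionCode, dotProductBilin_apply_apply,
    dotProduct_comm _ y]
  rfl
end

section
/- Let C be a Z_4-code of type 4^{k_1}2^{k_2} with generator matrix G in standard form with rows g_1,...,g_{k_1+k_2}. Then the Gray image φ(C) is a linear binary code if and only if 2·g_i g_j ∈ C for all i, j ∈ {1,...,k_1}, where g_i g_j denotes the componentwise product in Z_4. -/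
open Finset

def wtL {n : ℕ} (x : Fin n → ZMod 4) : ℕ :=
  nCount x 1 + 2 * nCount x 2 + nCount x 3

/-- `ψ(0)=(0,0), ψ(1)=(0,1), ψ(2)=(1,1), ψ(3)=(1,0)` -/
def psi (a : ZMod 4) : ZMod 2 × ZMod 2 :=
  (if 2 ≤ a.val then 1 else 0, if a.val = 1 ∨ a.val = 2 then 1 else 0)

/-- the Gray map, `F_2^{2n}` realized as `Fin n → ZMod 2 × ZMod 2` -/
def gray {n : ℕ} (x : Fin n → ZMod 4) : Fin n → ZMod 2 × ZMod 2 :=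
  fun i => psi (x i)

/-- Hamming weight on `F_2^{2n}` -/
def wt2 {n : ℕ} (y : Fin n → ZMod 2 × ZMod 2) : ℕ :=
  (Finset.univ.filter (fun i => (y i).1 ≠ 0)).card +
    (Finset.univ.filter (fun i => (y i).2 ≠ 0)).card

/-- standard binary inner product on `F_2^{2n}` -/
def inner2 {n : ℕ} (y z : Fin n → ZMod 2 × ZMod 2) : ZMod 2 :=
  ∑ i : Fin n, ((y i).1 * (z i).1 + (y i).2 * (z i).2)

/-- Gray map over an arbitrary coordinate index type -/
def gray' {ι : Type*} (x : ι → ZMod 4) : ι → ZMod 2 × ZMod 2 :=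
  fun i => psi (x i)

def bil {ι : Type*} (x y : ι → ZMod 4) : ι → ZMod 4 := fun k => 2 * (x k * y k)

lemma psi_add : ∀ a b : ZMod 4, psi (a + b) = psi a + psi b + psi (2 * (a * b)) := by decide

lemma psi_injective : ∀ a b : ZMod 4, psi a = psi b → a = b := by decide

lemma psi_zero : psi 0 = 0 := by decide

lemma z4_two_left : ∀ t s : ZMod 4, 2 * ((2 * t) * s) = 0 := by decide
lemma z4_two_right : ∀ t s : ZMod 4, 2 * (s * (2 * t)) = 0 := by decide
lemma pp_self : ∀ p : ZMod 2 × ZMod 2, p + p = 0 := by decide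

lemma gray'_add {ι : Type*} (x y : ι → ZMod 4) :
    gray' (x + y) = gray' x + gray' y + gray' (bil x y) :=
  funext fun k => psi_add (x k) (y k)

lemma gray'_inj {ι : Type*} : Function.Injective (gray' (ι := ι)) :=
  fun x y h => funext fun k => psi_injective _ _ (congrFun h k)

lemma gray'_zero {ι : Type*} : gray' (0 : ι → ZMod 4) = 0 :=
  funext fun _ => psi_zero

lemma bil_comm {ι : Type*} (x y : ι → ZMod 4) : bil x y = bil y x :=
  funext fun k => by simp [bil, mul_comm]

lemma bil_zero_right {ι : Type*} (x : ι → ZMod 4) : bil x 0 = 0 :=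
  funext fun k => by simp [bil]

lemma bil_add_right {ι : Type*} (x y z : ι → ZMod 4) :
    bil x (y + z) = bil x y + bil x z :=
  funext fun k => by simp [bil]; ring

lemma bil_smul_right {ι : Type*} (c : ZMod 4) (x y : ι → ZMod 4) :
    bil x (c • y) = c • bil x y :=
  funext fun k => by simp [bil]; ring


/-- standard-form linearity criterion for the Gray image. -/
theorem gray_image_linear_iff {k1 k2 r : ℕ}
    (A : Fin k1 → Fin k2 → ZMod 4) (hA : ∀ i j, A i j = 0 ∨ A i j = 1)
    (B : Fin k1 → Fin r → ZMod 4)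
    (D : Fin k2 → Fin r → ZMod 4) (hD : ∀ i j, D i j = 0 ∨ D i j = 1)
    (g : Fin k1 ⊕ Fin k2 → (Fin k1 ⊕ (Fin k2 ⊕ Fin r) → ZMod 4))
    (hg1 : ∀ i : Fin k1, ∀ j : Fin k1, g (Sum.inl i) (Sum.inl j) = if i = j then 1 else 0)
    (hg2 : ∀ i : Fin k1, ∀ j : Fin k2, g (Sum.inl i) (Sum.inr (Sum.inl j)) = A i j)
    (hg3 : ∀ i : Fin k1, ∀ j : Fin r, g (Sum.inl i) (Sum.inr (Sum.inr j)) = B i j)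
    (hg4 : ∀ i : Fin k2, ∀ j : Fin k1, g (Sum.inr i) (Sum.inl j) = 0)
    (hg5 : ∀ i : Fin k2, ∀ j : Fin k2, g (Sum.inr i) (Sum.inr (Sum.inl j)) =
      if i = j then 2 else 0)
    (hg6 : ∀ i : Fin k2, ∀ j : Fin r, g (Sum.inr i) (Sum.inr (Sum.inr j)) = 2 * D i j)
    (C : Submodule (ZMod 4) (Fin k1 ⊕ (Fin k2 ⊕ Fin r) → ZMod 4))
    (hC : C = Submodule.span (ZMod 4) (Set.range g)) :
    (∃ W : Submodule (ZMod 2) (Fin k1 ⊕ (Fin k2 ⊕ Fin r) → ZMod 2 × ZMod 2),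
        gray' '' (C : Set (Fin k1 ⊕ (Fin k2 ⊕ Fin r) → ZMod 4)) = (W : Set _)) ↔
      ∀ i j : Fin k1, (fun k => 2 * (g (Sum.inl i) k * g (Sum.inl j) k)) ∈ C := by
  have hgmem : ∀ a, g a ∈ C := fun a => hC ▸ Submodule.subset_span ⟨a, rfl⟩
  have heven : ∀ (i : Fin k2) k, ∃ t, g (Sum.inr i) k = 2 * t := by
    rintro i (j | j | j)
    · exact ⟨0, by rw [hg4]; ring⟩
    · refine ⟨if i = j then 1 else 0, ?_⟩
      rw [hg5]; split <;> ring
    · exact ⟨D i j, hg6 i j⟩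
  constructor
  · rintro ⟨W, hW⟩ i j
    have hx := hgmem (Sum.inl i)
    have hy := hgmem (Sum.inl j)
    have mW : ∀ z ∈ C, gray' z ∈ W := fun z hz => by
      rw [← SetLike.mem_coe, ← hW]; exact Set.mem_image_of_mem _ hz
    have h1 := mW _ hx
    have h2 := mW _ hy
    have h3 := mW _ (C.add_mem hx hy)
    have key : gray' (bil (g (Sum.inl i)) (g (Sum.inl j))) =
        gray' (g (Sum.inl i) + g (Sum.inl j)) - gray' (g (Sum.inl i)) - gray' (g (Sum.inl j)) := by
      rw [gray'_add]; abel
    have hmem : gray' (bil (g (Sum.inl i)) (g (Sum.inl j))) ∈ W := by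
      rw [key]; exact W.sub_mem (W.sub_mem h3 h1) h2
    rw [← SetLike.mem_coe, ← hW] at hmem
    obtain ⟨z, hz, hze⟩ := hmem
    have := gray'_inj hze
    rw [this] at hz
    exact hz
  · intro h
    -- key: bil closed
    have key : ∀ x ∈ C, ∀ y ∈ C, bil x y ∈ C := by
      rw [hC]
      intro x hx y hy
      induction hx, hy using Submodule.span_induction₂ with
      | mem_mem x y hx hy =>
        obtain ⟨a, rfl⟩ := hx
        obtain ⟨b, rfl⟩ := hy
        match a, b with
        | Sum.inl i, Sum.inl j => exact hC ▸ h i j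
        | Sum.inr i, b =>
          have : bil (g (Sum.inr i)) (g b) = 0 := funext fun k => by
            obtain ⟨t, ht⟩ := heven i k
            simp [bil, ht, z4_two_left]
          rw [this]; exact Submodule.zero_mem _
        | Sum.inl i, Sum.inr jj =>
          have : bil (g (Sum.inl i)) (g (Sum.inr jj)) = 0 := funext fun k => by
            obtain ⟨t, ht⟩ := heven jj k
            simp [bil, ht, z4_two_right]
          rw [this]; exact Submodule.zero_mem _
      | zero_left y hy => rw [bil_comm, bil_zero_right]; exact Submodule.zero_mem _
      | zero_right x hx => rw [bil_zero_right]; exact Submodule.zero_mem _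
      | add_left x y z hx hy hz h1 h2 =>
        rw [bil_comm, bil_add_right, bil_comm z x, bil_comm z y]
        exact Submodule.add_mem _ h1 h2
      | add_right x y z hx hy hz h1 h2 =>
        rw [bil_add_right]; exact Submodule.add_mem _ h1 h2
      | smul_left c x y hx hy h1 =>
        rw [bil_comm, bil_smul_right, bil_comm y x]
        exact Submodule.smul_mem _ _ h1
      | smul_right c x y hx hy h1 =>
        rw [bil_smul_right]; exact Submodule.smul_mem _ _ h1
    refine ⟨{ carrier := gray' '' C
              zero_mem' := ⟨0, C.zero_mem, gray'_zero⟩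
              add_mem' := ?_
              smul_mem' := ?_ }, rfl⟩
    · rintro a b ⟨x, hx, rfl⟩ ⟨y, hy, rfl⟩
      refine ⟨x + y + bil x y, C.add_mem (C.add_mem hx hy) (key x hx y hy), ?_⟩
      have h0 : bil (x + y) (bil x y) = 0 := funext fun k => by
        show 2 * ((x + y) k * (2 * (x k * y k))) = 0
        exact z4_two_right _ _
      rw [gray'_add (x + y) (bil x y), h0, gray'_zero, add_zero, gray'_add x y]
      funext k
      show _ = (gray' x + gray' y) k
      simp only [Pi.add_apply]
      rw [add_assoc, add_assoc, pp_self _, add_zero]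
    · intro c a ha
      have hc : c = 0 ∨ c = 1 := by fin_cases c <;> [exact Or.inl rfl; exact Or.inr rfl]
      rcases hc with rfl | rfl
      · rw [zero_smul]; exact ⟨0, C.zero_mem, gray'_zero⟩
      · rw [one_smul]; exact ha
end

section
/- Let m ≥ 3 be odd and let C_f be the cyclic self-orthogonal Z_4-code of length 2^m generated by the truth-table codeword c_f of a gbent function f(x,y) = 2a(x)(1+y)+2b(x)y+y built from bent functions a,b. Then the Gray image φ(C_f) is a linear, self-orthogonal binary code of length 2^{m+1}. -/
open Finset

/-! ### Auxiliary lemmas -/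

section Aux

/- pointwise facts about `ZMod 4` and `psi`, all by `decide` -/
lemma psi_add_twist : ∀ x y : ZMod 4, psi (x + y + 2*x*y) = psi x + psi y := by decide
lemma two_mul_eq_of_parity : ∀ x y : ZMod 4, x.val % 2 = y.val % 2 → 2*x*y = 2*x := by decide
lemma two_mul_eq_zero_of_parity : ∀ x y : ZMod 4, x.val % 2 ≠ y.val % 2 → 2*x*y = 0 := by decide
lemma psi_dot : ∀ x y : ZMod 4,
    (psi x).1*(psi y).1 + (psi x).2*(psi y).2 = (psi (x*y)).2 := by decide
lemma psi2_add : ∀ x y : ZMod 4,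
    (psi (x+y)).2 = (psi x).2 + (psi y).2 + ((x.val : ZMod 2))*((y.val : ZMod 2)) := by decide
lemma psi2_smul : ∀ r x : ZMod 4,
    (psi (r*x)).2 = ((r.val : ZMod 2)) * (psi x).2 + (psi r).1 * ((x.val : ZMod 2)) := by decide
lemma bar_mul : ∀ x y : ZMod 4,
    (((x*y).val : ZMod 2)) = ((x.val : ZMod 2))*((y.val : ZMod 2)) := by decide
lemma bar_add : ∀ x y : ZMod 4,
    (((x+y).val : ZMod 2)) = ((x.val : ZMod 2))+((y.val : ZMod 2)) := by decide
lemma psi2_mul_eo : ∀ x y : ZMod 4,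
    x.val % 2 = 0 → y.val % 2 = 1 → (psi (x*y)).2 = (psi x).1 := by decide
lemma psi2_mul_oo : ∀ x y : ZMod 4,
    x.val % 2 = 1 → y.val % 2 = 1 → (psi (x*y)).2 = 1 + (psi x).1 + (psi y).1 := by decide
lemma psi2_mul_ee : ∀ x y : ZMod 4,
    x.val % 2 = 0 → y.val % 2 = 0 → (psi (x*y)).2 = 0 := by decide
lemma psi2_zero_mul : ∀ z : ZMod 4, (psi (0 * z)).2 = 0 := by decide
lemma psi2_mul_zero : ∀ z : ZMod 4, (psi (z * 0)).2 = 0 := by decide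
lemma zmod2_cases : ∀ z : ZMod 2, z = 0 ∨ z = 1 := by decide

lemma cast2_eq_of_mod {x y : ℕ} (h : x % 2 = y % 2) : ((x : ZMod 2)) = (y : ZMod 2) := by
  rw [← ZMod.natCast_mod x 2, ← ZMod.natCast_mod y 2, h]

lemma cf_parity {m : ℕ} (a b : (Fin (m - 1) → ZMod 2) → ZMod 2) (k : Fin (2^m)) :
    (cf m a b k).val % 2 = k.val % 2 := by
  unfold cf gfun
  rcases Nat.even_or_odd k.val with hk | hk
  · have h0 : Nat.testBit k.val 0 = false := by
      simp [Nat.testBit_zero, Nat.even_iff.mp hk]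
    rw [h0]
    rcases zmod2_cases
        (a (fun j : Fin (m-1) => if Nat.testBit k.val (m - 1 - (j:ℕ)) then 1 else 0)) with h | h <;>
      rw [h] <;> simp [Nat.even_iff.mp hk] <;> decide
  · have h0 : Nat.testBit k.val 0 = true := by
      simp [Nat.testBit_zero, Nat.odd_iff.mp hk]
    rw [h0]
    rcases zmod2_cases
        (a (fun j : Fin (m-1) => if Nat.testBit k.val (m - 1 - (j:ℕ)) then 1 else 0)) with h | h <;>
    rcases zmod2_cases
        (b (fun j : Fin (m-1) => if Nat.testBit k.val (m - 1 - (j:ℕ)) then 1 else 0)) with h' | h' <;>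
      rw [h, h'] <;> simp [Nat.odd_iff.mp hk] <;> decide

lemma fin_add_parity {m : ℕ} (hm : 1 ≤ m) (i s : Fin (2^m)) :
    (i + s).val % 2 = (i.val + s.val) % 2 := by
  rw [Fin.add_def]
  exact Nat.mod_mod_of_dvd _ (dvd_pow_self 2 (show m ≠ 0 by omega))

lemma zsum_translate {n : ℕ} [NeZero n] (f : Fin n → ZMod 2) (s : Fin n) :
    ∑ i : Fin n, f (i + s) = ∑ i : Fin n, f i :=
  Fintype.sum_equiv (Equiv.addRight s) _ _ (fun _ => rfl)

lemma fsum_range (F : ZMod 2 → ZMod 2) (k : ℕ) :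
    ∑ i ∈ Finset.range (4*k), F ((i : ZMod 2)) = 0 := by
  have h4 : (4 : ZMod 2) = 0 := by decide
  have h3 : (3 : ZMod 2) = 1 := by decide
  have h2 : (2 : ZMod 2) = 0 := by decide
  induction k with
  | zero => simp
  | succ k ih =>
    have h4' : 4*(k+1) = (4*k) + 1 + 1 + 1 + 1 := by ring
    rw [h4', Finset.sum_range_succ, Finset.sum_range_succ, Finset.sum_range_succ,
      Finset.sum_range_succ, ih]
    have e0 : ((4*k : ℕ) : ZMod 2) = 0 := by push_cast; rw [h4]; ring
    have e1 : ((4*k+1 : ℕ) : ZMod 2) = 1 := by push_cast; rw [h4]; ring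
    have e2 : ((4*k+1+1 : ℕ) : ZMod 2) = 0 := by push_cast; rw [h4]; ring_nf; exact h2
    have e3 : ((4*k+1+1+1 : ℕ) : ZMod 2) = 1 := by push_cast; rw [h4]; ring_nf; rw [h3]
    rw [e0, e1, e2, e3]
    rw [show (0 : ZMod 2) + F 0 + F 1 + F 0 + F 1 = (F 0 + F 0) + (F 1 + F 1) by ring,
      CharTwo.add_self_eq_zero, CharTwo.add_self_eq_zero, add_zero]

lemma fsum {m : ℕ} (hm : 3 ≤ m) (F : ZMod 2 → ZMod 2) :
    ∑ i : Fin (2^m), F ((i.val : ZMod 2)) = 0 := by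
  obtain ⟨k, hk⟩ : ∃ k, m = k + 2 := ⟨m - 2, by omega⟩
  have h : (2:ℕ)^m = 4 * 2^k := by subst hk; ring
  rw [Fin.sum_univ_eq_sum_range (fun j => F ((j : ZMod 2))), h]
  exact fsum_range F _

variable {m : ℕ} (a b : (Fin (m - 1) → ZMod 2) → ZMod 2)

lemma gen_mem (t : Fin (2^m)) :
    (fun i => cf m a b (i + t)) ∈ cyclicSpan (cf m a b) :=
  Submodule.subset_span ⟨t, rfl⟩

/-- every codeword reduces mod 2 to an affine function of the parity of the index -/
lemma bar_affine (hm : 3 ≤ m) :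
    ∀ u ∈ cyclicSpan (cf m a b), ∃ α β : ZMod 2,
      ∀ i : Fin (2^m), (((u i).val : ZMod 2)) = α * ((i.val : ZMod 2)) + β := by
  intro u hu
  induction hu using Submodule.span_induction with
  | mem x hx =>
    obtain ⟨t, rfl⟩ := hx
    refine ⟨1, (t.val : ZMod 2), fun i => ?_⟩
    have h1 : (((cf m a b (i+t)).val : ZMod 2)) = (((i+t).val : ZMod 2)) :=
      cast2_eq_of_mod (cf_parity a b (i+t))
    have h2 : (((i+t).val : ZMod 2)) = ((i.val : ZMod 2)) + ((t.val : ZMod 2)) := by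
      rw [cast2_eq_of_mod (fin_add_parity (by omega) i t)]
      push_cast
      ring
    show (((cf m a b (i+t)).val : ZMod 2)) = _
    rw [h1, h2]; ring
  | zero =>
    exact ⟨0, 0, fun i => by simp⟩
  | add x y hx hy ihx ihy =>
    obtain ⟨α, β, h⟩ := ihx
    obtain ⟨α', β', h'⟩ := ihy
    refine ⟨α + α', β + β', fun i => ?_⟩
    show (((x i + y i).val : ZMod 2)) = _
    rw [bar_add, h i, h' i]; ring
  | smul r x hx ih =>
    obtain ⟨α, β, h⟩ := ih
    refine ⟨(r.val : ZMod 2) * α, (r.val : ZMod 2) * β, fun i => ?_⟩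
    show (((r * x i).val : ZMod 2)) = _
    rw [bar_mul, h i]; ring

lemma S2 (hm : 3 ≤ m) {u v : Fin (2^m) → ZMod 4}
    (hu : u ∈ cyclicSpan (cf m a b)) (hv : v ∈ cyclicSpan (cf m a b)) :
    ∑ i : Fin (2^m), (((u i).val : ZMod 2)) * (((v i).val : ZMod 2)) = 0 := by
  obtain ⟨α, β, h⟩ := bar_affine a b hm u hu
  obtain ⟨α', β', h'⟩ := bar_affine a b hm v hv
  calc ∑ i : Fin (2^m), (((u i).val : ZMod 2)) * (((v i).val : ZMod 2))
      = ∑ i : Fin (2^m), (fun z : ZMod 2 => (α*z+β)*(α'*z+β')) ((i.val : ZMod 2)) :=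
        Finset.sum_congr rfl (fun i _ => by rw [h i, h' i])
    _ = 0 := fsum hm (fun z : ZMod 2 => (α*z+β)*(α'*z+β'))

lemma S4 (hm : 3 ≤ m) {u1 u2 u3 u4 : Fin (2^m) → ZMod 4}
    (h1 : u1 ∈ cyclicSpan (cf m a b)) (h2 : u2 ∈ cyclicSpan (cf m a b))
    (h3 : u3 ∈ cyclicSpan (cf m a b)) (h4 : u4 ∈ cyclicSpan (cf m a b)) :
    ∑ i : Fin (2^m), ((((u1 i).val : ZMod 2)) * (((u2 i).val : ZMod 2))) *
      ((((u3 i).val : ZMod 2)) * (((u4 i).val : ZMod 2))) = 0 := by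
  obtain ⟨α1, β1, g1⟩ := bar_affine a b hm u1 h1
  obtain ⟨α2, β2, g2⟩ := bar_affine a b hm u2 h2
  obtain ⟨α3, β3, g3⟩ := bar_affine a b hm u3 h3
  obtain ⟨α4, β4, g4⟩ := bar_affine a b hm u4 h4
  calc ∑ i : Fin (2^m), ((((u1 i).val : ZMod 2)) * (((u2 i).val : ZMod 2))) *
      ((((u3 i).val : ZMod 2)) * (((u4 i).val : ZMod 2)))
      = ∑ i : Fin (2^m),
          (fun z : ZMod 2 => ((α1*z+β1)*(α2*z+β2))*((α3*z+β3)*(α4*z+β4))) ((i.val : ZMod 2)) :=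
        Finset.sum_congr rfl (fun i _ => by rw [g1 i, g2 i, g3 i, g4 i])
    _ = 0 := fsum hm (fun z : ZMod 2 => ((α1*z+β1)*(α2*z+β2))*((α3*z+β3)*(α4*z+β4)))

/-- `2 u v ∈ C` for all `u, v ∈ C` -/
lemma two_mul_mem (hm : 3 ≤ m) {u v : Fin (2^m) → ZMod 4}
    (hu : u ∈ cyclicSpan (cf m a b)) (hv : v ∈ cyclicSpan (cf m a b)) :
    (fun i => 2 * u i * v i) ∈ cyclicSpan (cf m a b) := by
  induction hu, hv using Submodule.span_induction₂ with
  | mem_mem x y hx hy =>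
    obtain ⟨s, rfl⟩ := hx
    obtain ⟨t, rfl⟩ := hy
    by_cases hp : s.val % 2 = t.val % 2
    · have heq : (fun i => 2 * cf m a b (i+s) * cf m a b (i+t))
          = (2 : ZMod 4) • (fun i => cf m a b (i+s)) := by
        funext i
        rw [Pi.smul_apply, smul_eq_mul]
        refine two_mul_eq_of_parity _ _ ?_
        rw [cf_parity, cf_parity, fin_add_parity (by omega), fin_add_parity (by omega)]
        omega
      show (fun i => 2 * cf m a b (i+s) * cf m a b (i+t)) ∈ _
      rw [heq]
      exact Submodule.smul_mem _ _ (gen_mem a b s)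
    · have heq : (fun i => 2 * cf m a b (i+s) * cf m a b (i+t)) = 0 := by
        funext i
        refine two_mul_eq_zero_of_parity _ _ ?_
        rw [cf_parity, cf_parity, fin_add_parity (by omega), fin_add_parity (by omega)]
        omega
      show (fun i => 2 * cf m a b (i+s) * cf m a b (i+t)) ∈ _
      rw [heq]
      exact Submodule.zero_mem _
  | zero_left y hy =>
    have : (fun i => 2 * (0 : Fin (2^m) → ZMod 4) i * y i) = 0 := by
      funext i; simp
    rw [this]; exact Submodule.zero_mem _
  | zero_right x hx =>
    have : (fun i => 2 * x i * (0 : Fin (2^m) → ZMod 4) i) = 0 := by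
      funext i; simp
    rw [this]; exact Submodule.zero_mem _
  | add_left x y z hx hy hz ihx ihy =>
    have : (fun i => 2 * (x + y) i * z i)
        = (fun i => 2 * x i * z i) + (fun i => 2 * y i * z i) := by
      funext i; simp [Pi.add_apply]; ring
    rw [this]; exact Submodule.add_mem _ ihx ihy
  | add_right x y z hx hy hz ihy ihz =>
    have : (fun i => 2 * x i * (y + z) i)
        = (fun i => 2 * x i * y i) + (fun i => 2 * x i * z i) := by
      funext i; simp [Pi.add_apply]; ring
    rw [this]; exact Submodule.add_mem _ ihy ihz
  | smul_left r x y hx hy ih =>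
    have : (fun i => 2 * (r • x) i * y i) = r • (fun i => 2 * x i * y i) := by
      funext i; simp [Pi.smul_apply, smul_eq_mul]; ring
    rw [this]; exact Submodule.smul_mem _ _ ih
  | smul_right r x y hx hy ih =>
    have : (fun i => 2 * x i * (r • y) i) = r • (fun i => 2 * x i * y i) := by
      funext i; simp [Pi.smul_apply, smul_eq_mul]; ring
    rw [this]; exact Submodule.smul_mem _ _ ih

/-- the key orthogonality computation: `Φ(u v) = 0` for `u, v ∈ C` -/
lemma phi_prod (hm : 3 ≤ m) {u v : Fin (2^m) → ZMod 4}
    (hu : u ∈ cyclicSpan (cf m a b)) (hv : v ∈ cyclicSpan (cf m a b)) :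
    ∑ i : Fin (2^m), (psi (u i * v i)).2 = 0 := by
  induction hu, hv using Submodule.span_induction₂ with
  | mem_mem x y hx hy =>
    obtain ⟨s, rfl⟩ := hx
    obtain ⟨t, rfl⟩ := hy
    show ∑ i : Fin (2^m), (psi (cf m a b (i+s) * cf m a b (i+t))).2 = 0
    by_cases hp : s.val % 2 = t.val % 2
    · -- same parity
      set A : Fin (2^m) → ZMod 2 :=
        fun j => if j.val % 2 = 1 then 1 + (psi (cf m a b j)).1 else 0 with hA
      set B : Fin (2^m) → ZMod 2 :=
        fun j => if j.val % 2 = 1 then (psi (cf m a b j)).1 else 0 with hB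
      have hterm : ∀ i : Fin (2^m),
          (psi (cf m a b (i+s) * cf m a b (i+t))).2 = A (i+s) + B (i+t) := by
        intro i
        have hs' : (i+s).val % 2 = (i.val + s.val) % 2 := fin_add_parity (by omega) i s
        have ht' : (i+t).val % 2 = (i.val + t.val) % 2 := fin_add_parity (by omega) i t
        by_cases hi : (i.val + s.val) % 2 = 1
        · have h1 : (i+s).val % 2 = 1 := by omega
          have h2 : (i+t).val % 2 = 1 := by omega
          rw [psi2_mul_oo _ _ ((cf_parity a b (i+s)).trans h1)
            ((cf_parity a b (i+t)).trans h2)]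
          simp only [hA, hB, h1, h2, if_pos]
        · have h1 : (i+s).val % 2 = 0 := by omega
          have h2 : (i+t).val % 2 = 0 := by omega
          rw [psi2_mul_ee _ _ ((cf_parity a b (i+s)).trans h1)
            ((cf_parity a b (i+t)).trans h2)]
          simp [hA, hB, h1, h2]
      calc ∑ i : Fin (2^m), (psi (cf m a b (i+s) * cf m a b (i+t))).2
          = ∑ i : Fin (2^m), (A (i+s) + B (i+t)) :=
            Finset.sum_congr rfl (fun i _ => hterm i)
        _ = (∑ i : Fin (2^m), A (i+s)) + ∑ i : Fin (2^m), B (i+t) := Finset.sum_add_distrib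
        _ = (∑ j : Fin (2^m), A j) + ∑ j : Fin (2^m), B j := by
            rw [zsum_translate A s, zsum_translate B t]
        _ = ∑ j : Fin (2^m), (A j + B j) := Finset.sum_add_distrib.symm
        _ = ∑ j : Fin (2^m), ((j.val : ZMod 2)) := by
            refine Finset.sum_congr rfl (fun j _ => ?_)
            by_cases hj : j.val % 2 = 1
            · rw [hA, hB]
              simp only [hj, if_pos]
              rw [cast2_eq_of_mod (show j.val % 2 = 1 % 2 by omega), Nat.cast_one,
                add_assoc, CharTwo.add_self_eq_zero, add_zero]
            · rw [hA, hB]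
              simp only [hj, if_neg, if_false]
              rw [cast2_eq_of_mod (show j.val % 2 = 0 % 2 by omega), Nat.cast_zero, add_zero]
        _ = 0 := fsum hm (fun z => z)
    · -- opposite parity
      set Cc : Fin (2^m) → ZMod 2 :=
        fun j => if j.val % 2 = 0 then (psi (cf m a b j)).1 else 0 with hC
      have hterm : ∀ i : Fin (2^m),
          (psi (cf m a b (i+s) * cf m a b (i+t))).2 = Cc (i+s) + Cc (i+t) := by
        intro i
        have hs' : (i+s).val % 2 = (i.val + s.val) % 2 := fin_add_parity (by omega) i s
        have ht' : (i+t).val % 2 = (i.val + t.val) % 2 := fin_add_parity (by omega) i t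
        by_cases hi : (i.val + s.val) % 2 = 0
        · have h1 : (i+s).val % 2 = 0 := by omega
          have h2 : (i+t).val % 2 = 1 := by omega
          rw [psi2_mul_eo _ _ ((cf_parity a b (i+s)).trans h1)
            ((cf_parity a b (i+t)).trans h2)]
          simp [hC, h1, h2]
        · have h1 : (i+s).val % 2 = 1 := by omega
          have h2 : (i+t).val % 2 = 0 := by omega
          rw [mul_comm, psi2_mul_eo _ _ ((cf_parity a b (i+t)).trans h2)
            ((cf_parity a b (i+s)).trans h1)]
          simp [hC, h1, h2]
      calc ∑ i : Fin (2^m), (psi (cf m a b (i+s) * cf m a b (i+t))).2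
          = ∑ i : Fin (2^m), (Cc (i+s) + Cc (i+t)) :=
            Finset.sum_congr rfl (fun i _ => hterm i)
        _ = (∑ i : Fin (2^m), Cc (i+s)) + ∑ i : Fin (2^m), Cc (i+t) := Finset.sum_add_distrib
        _ = (∑ j : Fin (2^m), Cc j) + ∑ j : Fin (2^m), Cc j := by
            rw [zsum_translate Cc s, zsum_translate Cc t]
        _ = 0 := CharTwo.add_self_eq_zero _
  | zero_left y hy =>
    have : ∀ i : Fin (2^m), (psi ((0 : Fin (2^m) → ZMod 4) i * y i)).2 = 0 := by
      intro i; rw [Pi.zero_apply]; exact psi2_zero_mul _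
    rw [Finset.sum_congr rfl (fun i _ => this i), Finset.sum_const_zero]
  | zero_right x hx =>
    have : ∀ i : Fin (2^m), (psi (x i * (0 : Fin (2^m) → ZMod 4) i)).2 = 0 := by
      intro i; rw [Pi.zero_apply]; exact psi2_mul_zero _
    rw [Finset.sum_congr rfl (fun i _ => this i), Finset.sum_const_zero]
  | add_left x y z hx hy hz ihx ihy =>
    have hterm : ∀ i : Fin (2^m), (psi ((x + y) i * z i)).2
        = (psi (x i * z i)).2 + (psi (y i * z i)).2 +
          ((((x i * z i).val : ZMod 2)) * (((y i * z i).val : ZMod 2))) := by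
      intro i
      rw [Pi.add_apply, add_mul]
      exact psi2_add _ _
    rw [Finset.sum_congr rfl (fun i _ => hterm i), Finset.sum_add_distrib,
      Finset.sum_add_distrib, ihx, ihy]
    have : ∑ i : Fin (2^m), (((x i * z i).val : ZMod 2)) * (((y i * z i).val : ZMod 2))
        = ∑ i : Fin (2^m), ((((x i).val : ZMod 2)) * (((z i).val : ZMod 2))) *
            ((((y i).val : ZMod 2)) * (((z i).val : ZMod 2))) :=
      Finset.sum_congr rfl (fun i _ => by rw [bar_mul, bar_mul])
    rw [this, S4 a b hm hx hz hy hz]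
    ring
  | add_right x y z hx hy hz ihy ihz =>
    have hterm : ∀ i : Fin (2^m), (psi (x i * (y + z) i)).2
        = (psi (x i * y i)).2 + (psi (x i * z i)).2 +
          ((((x i * y i).val : ZMod 2)) * (((x i * z i).val : ZMod 2))) := by
      intro i
      rw [Pi.add_apply, mul_add]
      exact psi2_add _ _
    rw [Finset.sum_congr rfl (fun i _ => hterm i), Finset.sum_add_distrib,
      Finset.sum_add_distrib, ihy, ihz]
    have : ∑ i : Fin (2^m), (((x i * y i).val : ZMod 2)) * (((x i * z i).val : ZMod 2))
        = ∑ i : Fin (2^m), ((((x i).val : ZMod 2)) * (((y i).val : ZMod 2))) *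
            ((((x i).val : ZMod 2)) * (((z i).val : ZMod 2))) :=
      Finset.sum_congr rfl (fun i _ => by rw [bar_mul, bar_mul])
    rw [this, S4 a b hm hx hy hx hz]
    ring
  | smul_left r x y hx hy ih =>
    have hterm : ∀ i : Fin (2^m), (psi ((r • x) i * y i)).2
        = ((r.val : ZMod 2)) * (psi (x i * y i)).2 +
          (psi r).1 * ((((x i * y i).val : ZMod 2))) := by
      intro i
      rw [Pi.smul_apply, smul_eq_mul, mul_assoc]
      exact psi2_smul _ _
    rw [Finset.sum_congr rfl (fun i _ => hterm i), Finset.sum_add_distrib,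
      ← Finset.mul_sum, ← Finset.mul_sum, ih]
    have : ∑ i : Fin (2^m), (((x i * y i).val : ZMod 2))
        = ∑ i : Fin (2^m), (((x i).val : ZMod 2)) * (((y i).val : ZMod 2)) :=
      Finset.sum_congr rfl (fun i _ => by rw [bar_mul])
    rw [this, S2 a b hm hx hy]
    ring
  | smul_right r x y hx hy ih =>
    have hterm : ∀ i : Fin (2^m), (psi (x i * (r • y) i)).2
        = ((r.val : ZMod 2)) * (psi (x i * y i)).2 +
          (psi r).1 * ((((x i * y i).val : ZMod 2))) := by
      intro i
      rw [Pi.smul_apply, smul_eq_mul, mul_left_comm]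
      exact psi2_smul _ _
    rw [Finset.sum_congr rfl (fun i _ => hterm i), Finset.sum_add_distrib,
      ← Finset.mul_sum, ← Finset.mul_sum, ih]
    have : ∑ i : Fin (2^m), (((x i * y i).val : ZMod 2))
        = ∑ i : Fin (2^m), (((x i).val : ZMod 2)) * (((y i).val : ZMod 2)) :=
      Finset.sum_congr rfl (fun i _ => by rw [bar_mul])
    rw [this, S2 a b hm hx hy]
    ring

end Aux

theorem gray_image_Cf_linear_self_orthogonal {m : ℕ} (hm : Odd m) (hm3 : 3 ≤ m)
    (a b : (Fin (m - 1) → ZMod 2) → ZMod 2) (ha : IsBent a) (hb : IsBent b) :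
    (∃ W : Submodule (ZMod 2) (Fin (2 ^ m) → ZMod 2 × ZMod 2),
        gray '' ((cyclicSpan (cf m a b) : Set (Fin (2 ^ m) → ZMod 4))) = (W : Set _)) ∧
    (∀ u ∈ gray '' ((cyclicSpan (cf m a b) : Set (Fin (2 ^ m) → ZMod 4))),
      ∀ v ∈ gray '' ((cyclicSpan (cf m a b) : Set (Fin (2 ^ m) → ZMod 4))),
        inner2 u v = 0) := by
  have gray_zero : gray (0 : Fin (2^m) → ZMod 4) = 0 := by
    funext i
    show psi ((0 : Fin (2^m) → ZMod 4) i) = 0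
    rw [Pi.zero_apply]
    exact psi_zero
  have hzero_mem : (0 : Fin (2^m) → ZMod 2 × ZMod 2) ∈
      gray '' ((cyclicSpan (cf m a b) : Set (Fin (2 ^ m) → ZMod 4))) :=
    ⟨0, Submodule.zero_mem _, gray_zero⟩
  constructor
  · refine ⟨{
      carrier := gray '' ((cyclicSpan (cf m a b) : Set (Fin (2 ^ m) → ZMod 4)))
      zero_mem' := hzero_mem
      add_mem' := ?_
      smul_mem' := ?_ }, rfl⟩
    · rintro p q ⟨u, hu, rfl⟩ ⟨v, hv, rfl⟩
      refine ⟨u + v + (fun i => 2 * u i * v i),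
        Submodule.add_mem _ (Submodule.add_mem _ hu hv) (two_mul_mem a b hm3 hu hv), ?_⟩
      funext i
      show psi ((u + v + (fun i => 2 * u i * v i)) i) = psi (u i) + psi (v i)
      rw [Pi.add_apply, Pi.add_apply]
      exact psi_add_twist (u i) (v i)
    · intro c x hx
      rcases zmod2_cases c with hc | hc
      · rw [hc, zero_smul]; exact hzero_mem
      · rw [hc, one_smul]; exact hx
  · rintro p ⟨u, hu, rfl⟩ q ⟨v, hv, rfl⟩
    show inner2 (gray u) (gray v) = 0
    unfold inner2 gray
    calc ∑ i : Fin (2^m), ((psi (u i)).1 * (psi (v i)).1 + (psi (u i)).2 * (psi (v i)).2)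
        = ∑ i : Fin (2^m), (psi (u i * v i)).2 :=
          Finset.sum_congr rfl (fun i _ => psi_dot (u i) (v i))
      _ = 0 := phi_prod a b hm3 hu hv
end
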